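/- arXiv:2008.09476 — 6 statements merged into one kernel-verified Lean document; each statement's English description precedes it below -/
import Mathlib

section
/- For every real number s with 0 < s < 2 there exists a positive integer r_s such that for every integer r ≥ r_s the finite sum S_r(s) is strictly negative. -/
/-!
Write `F(x) = x^{-s}(-1 + s log x)` and `q = 2r + 1 - p`, so the summand is
`pq/(p - q) · (F p - F q)`. Since `F'(x) = s x^{-s-1}(2 - s log x) ≤ -s x^{-s-1}` once
`x ≥ e^{3/s}`, every summand with `q ≥ N := ⌈e^{3/s}⌉` is at most `-s (2r+1)^{-s-1} pq ≤ 0`, and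
the `r/2` summands with `p ≤ 3r/2` together contribute at most `-c r^{2-s}` with `c > 0`. The
fewer than `N` summands with `q < N` are at most `4N` each, because `|F| ≤ 1` on `[1, ∞)` and
`p - q ≥ r`. As `s < 2`, `r^{2-s}` eventually beats `4N²`.
-/

open Filter Finset

namespace SteklovZeta

variable {s : ℝ}

noncomputable def negRpowLog (s x : ℝ) : ℝ := x ^ (-s) * (-1 + s * Real.log x)

lemma hasDerivAt_negRpowLog (s : ℝ) {x : ℝ} (hx : 0 < x) :
    HasDerivAt (negRpowLog s) (s * x ^ (-s - 1) * (2 - s * Real.log x)) x := by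
  have hpow : HasDerivAt (fun t : ℝ => t ^ (-s)) (-s * x ^ (-s - 1)) x := by
    simpa using Real.hasDerivAt_rpow_const (p := -s) (Or.inl hx.ne')
  have hlog : HasDerivAt (fun t : ℝ => -1 + s * Real.log t) (s * x⁻¹) x :=
    ((Real.hasDerivAt_log hx.ne').const_mul s).const_add (-1)
  have hinv : x ^ (-s) * x⁻¹ = x ^ (-s - 1) := by
    rw [← Real.rpow_neg_one x, ← Real.rpow_add hx, sub_eq_add_neg]
  refine (hpow.mul hlog).congr_deriv ?_
  linear_combination s * hinv

/-- Beyond `e^{3/s}` the derivative `s x^{-s-1} (2 - s log x)` is at most `-s x^{-s-1}`. -/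
lemma negRpowLog_sub_le (hs : 0 < s) {x y B : ℝ} (hx : Real.exp (3 / s) ≤ x)
    (hxy : x ≤ y) (hyB : y ≤ B) :
    negRpowLog s y - negRpowLog s x ≤ -(s * B ^ (-s - 1)) * (y - x) := by
  have hpos : ∀ t ∈ Set.Icc (Real.exp (3 / s)) B, 0 < t :=
    fun t ht => (Real.exp_pos _).trans_le ht.1
  refine (convex_Icc _ _).image_sub_le_mul_sub_of_deriv_le
    (fun t ht => (hasDerivAt_negRpowLog s (hpos t ht)).continuousAt.continuousWithinAt)
    (fun t ht => (hasDerivAt_negRpowLog s (hpos t (interior_subset ht))).differentiableAt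
      |>.differentiableWithinAt) ?_ x ⟨hx, hxy.trans hyB⟩ y ⟨hx.trans hxy, hyB⟩ hxy
  intro t ht
  rw [interior_Icc] at ht
  have ht0 : 0 < t := hpos t (Set.Ioo_subset_Icc_self ht)
  rw [(hasDerivAt_negRpowLog s ht0).deriv]
  have hlog : 3 ≤ s * Real.log t := by
    have := Real.log_le_log (Real.exp_pos _) ht.1.le
    rw [Real.log_exp, div_le_iff₀ hs] at this
    linarith
  have hBt : B ^ (-s - 1) ≤ t ^ (-s - 1) :=
    Real.rpow_le_rpow_of_nonpos ht0 ht.2.le (by linarith)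
  have hst : 0 < s * t ^ (-s - 1) := mul_pos hs (Real.rpow_pos_of_pos ht0 _)
  nlinarith

lemma abs_negRpowLog_le_one (hs : 0 < s) {x : ℝ} (hx : 1 ≤ x) : |negRpowLog s x| ≤ 1 := by
  have hx0 : 0 < x := one_pos.trans_le hx
  have hpow : 0 < x ^ (-s) := Real.rpow_pos_of_pos hx0 _
  have hpow1 : x ^ (-s) ≤ 1 := Real.rpow_le_one_of_one_le_of_nonpos hx (by linarith)
  have hlog : 0 ≤ Real.log x := Real.log_nonneg hx
  have hinv : x ^ (-s) * x ^ s = 1 := by rw [← Real.rpow_add hx0]; simp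
  have hlog_le : s * Real.log x ≤ x ^ s - 1 := by
    rw [← Real.log_rpow hx0]
    exact Real.log_le_sub_one_of_pos (Real.rpow_pos_of_pos hx0 s)
  rw [negRpowLog, abs_le]
  constructor
  · nlinarith [mul_nonneg hpow.le (mul_nonneg hs.le hlog)]
  · nlinarith [mul_le_mul_of_nonneg_left hlog_le hpow.le]

/-- The summand of `S_r(s)` at `P = p`, `Q = 2r + 1 - p`; its denominator `2p - 2r - 1`
is `P - Q`. -/
noncomputable def pairTerm (s P Q : ℝ) : ℝ :=
  P * Q / (P - Q) * (negRpowLog s P - negRpowLog s Q)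

lemma pairTerm_le_neg_mul (hs : 0 < s) {P Q B : ℝ} (hQ : Real.exp (3 / s) ≤ Q) (hQP : Q < P)
    (hPB : P ≤ B) : pairTerm s P Q ≤ -(s * B ^ (-s - 1)) * (P * Q) := by
  have hQ0 : 0 < Q := (Real.exp_pos _).trans_le hQ
  have hPQ : 0 < P - Q := sub_pos.2 hQP
  have hw : 0 ≤ P * Q / (P - Q) := div_nonneg (mul_pos (hQ0.trans hQP) hQ0).le hPQ.le
  calc pairTerm s P Q ≤ P * Q / (P - Q) * (-(s * B ^ (-s - 1)) * (P - Q)) :=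
        mul_le_mul_of_nonneg_left (negRpowLog_sub_le hs hQ hQP.le hPB) hw
    _ = -(s * B ^ (-s - 1)) * (P * Q) := by field_simp

lemma pairTerm_nonpos (hs : 0 < s) {P Q : ℝ} (hQ : Real.exp (3 / s) ≤ Q) (hQP : Q < P) :
    pairTerm s P Q ≤ 0 := by
  have hQ0 : 0 < Q := (Real.exp_pos _).trans_le hQ
  have hP0 : 0 < P := hQ0.trans hQP
  have : 0 ≤ s * P ^ (-s - 1) * (P * Q) := by positivity
  linarith [pairTerm_le_neg_mul hs hQ hQP le_rfl]

lemma pairTerm_le (hs : 0 < s) {P Q : ℝ} (hQ : 1 ≤ Q) (hQP : Q < P) :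
    pairTerm s P Q ≤ 2 * (P * Q / (P - Q)) := by
  have hw : 0 ≤ P * Q / (P - Q) := div_nonneg (by nlinarith) (by linarith)
  have hP := abs_le.1 (abs_negRpowLog_le_one hs (hQ.trans hQP.le))
  have hQ' := abs_le.1 (abs_negRpowLog_le_one hs hQ)
  rw [pairTerm, mul_comm 2]
  exact mul_le_mul_of_nonneg_left (by linarith) hw

noncomputable def steklovSum (s : ℝ) (r : ℕ) : ℝ :=
  ∑ p ∈ Icc (r + 1) (2 * r), pairTerm s p (2 * r + 1 - p)

lemma sum_Ico_pairTerm_head_le (hs : 0 < s) {r : ℕ} (hr : 2 ≤ r)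
    (hexp : Real.exp (3 / s) ≤ r / 2) :
    ∑ p ∈ Ico (r + 1) (r + 1 + r / 2), pairTerm s p (2 * r + 1 - p) ≤
      -(s * (2 * r + 1 : ℝ) ^ (-s - 1)) * r ^ 3 / 8 := by
  set c := s * (2 * r + 1 : ℝ) ^ (-s - 1)
  have hc : 0 < c := mul_pos hs (Real.rpow_pos_of_pos (by positivity) _)
  have hterm : ∀ p ∈ Ico (r + 1) (r + 1 + r / 2),
      pairTerm s p (2 * r + 1 - p) ≤ -(c * (r * (r / 2))) := by
    intro p hp
    rw [mem_Ico] at hp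
    have hp₁ : (r : ℝ) + 1 ≤ p := by exact_mod_cast hp.1
    have hp₂ : (p : ℝ) ≤ r + r / 2 := by
      have : ((r / 2 : ℕ) : ℝ) ≤ r / 2 := Nat.cast_div_le
      have : (p : ℝ) ≤ r + (r / 2 : ℕ) := by exact_mod_cast (by omega : p ≤ r + r / 2)
      linarith
    have hQ : (r : ℝ) / 2 ≤ 2 * r + 1 - p := by linarith
    calc pairTerm s p (2 * r + 1 - p) ≤ -c * (p * (2 * r + 1 - p)) :=
          pairTerm_le_neg_mul hs (hexp.trans hQ) (by linarith) (by linarith)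
      _ ≤ -(c * (r * (r / 2))) := by
          rw [neg_mul, neg_le_neg_iff]
          exact mul_le_mul_of_nonneg_left (mul_le_mul (by linarith) hQ (by positivity)
            (by positivity)) hc.le
  have hcard : (r : ℝ) / 4 ≤ ((Ico (r + 1) (r + 1 + r / 2)).card : ℝ) := by
    rw [Nat.card_Ico, Nat.add_sub_cancel_left]
    have : (r : ℝ) ≤ 2 * (r / 2 : ℕ) + 1 := by exact_mod_cast (by omega : r ≤ 2 * (r / 2) + 1)
    have : (2 : ℝ) ≤ r := by exact_mod_cast hr
    linarith
  calc _ ≤ (Ico (r + 1) (r + 1 + r / 2)).card • -(c * (r * (r / 2))) :=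
        sum_le_card_nsmul _ _ _ hterm
    _ ≤ (r / 4) * -(c * (r * (r / 2))) := by
        rw [nsmul_eq_mul]
        exact mul_le_mul_of_nonpos_right hcard (neg_nonpos.2 (by positivity))
    _ = -c * r ^ 3 / 8 := by ring

lemma sum_Ico_pairTerm_nonpos (hs : 0 < s) {N r a b : ℕ} (hN : Real.exp (3 / s) ≤ N)
    (ha : r + 1 ≤ a) (hb : b + N ≤ 2 * r + 2) :
    ∑ p ∈ Ico a b, pairTerm s p (2 * r + 1 - p) ≤ 0 := by
  refine sum_nonpos fun p hp => ?_
  rw [mem_Ico] at hp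
  have hp₁ : (r : ℝ) + 1 ≤ p := by exact_mod_cast (by omega : r + 1 ≤ p)
  have hp₂ : (p : ℝ) + N ≤ 2 * r + 1 := by exact_mod_cast (by omega : p + N ≤ 2 * r + 1)
  exact pairTerm_nonpos hs (by linarith) (by linarith)

lemma sum_Ico_pairTerm_tail_le (hs : 0 < s) {N r : ℕ} (hr : 2 * N + 2 ≤ r) :
    ∑ p ∈ Ico (2 * r + 1 - N) (2 * r + 1), pairTerm s p (2 * r + 1 - p) ≤ 4 * N ^ 2 := by
  have hterm : ∀ p ∈ Ico (2 * r + 1 - N) (2 * r + 1),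
      pairTerm s p (2 * r + 1 - p) ≤ 4 * N := by
    intro p hp
    rw [mem_Ico] at hp
    have hp₁ : (p : ℝ) ≤ 2 * r := by exact_mod_cast (by omega : p ≤ 2 * r)
    have hQ : 2 * r + 1 - (p : ℝ) ≤ N := by
      have : (2 * r + 1 : ℝ) ≤ p + N := by exact_mod_cast (by omega : 2 * r + 1 ≤ p + N)
      linarith
    have hgap : (r : ℝ) ≤ p - (2 * r + 1 - p) := by
      have : (3 * r + 1 : ℝ) ≤ 2 * p := by exact_mod_cast (by omega : 3 * r + 1 ≤ 2 * p)
      linarith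
    have hr0 : (0 : ℝ) < r := by exact_mod_cast (by omega : 0 < r)
    have hw : p * (2 * r + 1 - p) / (p - (2 * r + 1 - p)) ≤ 2 * (N : ℝ) := by
      rw [div_le_iff₀ (hr0.trans_le hgap)]
      have : 0 ≤ 2 * r + 1 - (p : ℝ) := by linarith
      nlinarith
    calc pairTerm s p (2 * r + 1 - p) ≤ 2 * (p * (2 * r + 1 - p) / (p - (2 * r + 1 - p))) :=
          pairTerm_le hs (by linarith) (by linarith)
      _ ≤ 4 * N := by linarith
  calc _ ≤ (Ico (2 * r + 1 - N) (2 * r + 1)).card • (4 * N : ℝ) :=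
        sum_le_card_nsmul _ _ _ hterm
    _ ≤ N * (4 * N) := by
        rw [nsmul_eq_mul]
        gcongr
        exact_mod_cast (by rw [Nat.card_Ico]; omega)
    _ = 4 * N ^ 2 := by ring

lemma steklovSum_le (hs : 0 < s) {N r : ℕ} (hN : Real.exp (3 / s) ≤ N) (hr : 2 * N + 2 ≤ r) :
    steklovSum s r ≤ 4 * N ^ 2 - s * 3 ^ (-s - 1) / 8 * r ^ (2 - s) := by
  have hr₁ : (1 : ℝ) ≤ r := by exact_mod_cast (by omega : 1 ≤ r)
  have hr₀ : (0 : ℝ) < r := by linarith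
  have hsplit : steklovSum s r =
      ∑ p ∈ Ico (r + 1) (r + 1 + r / 2), pairTerm s p (2 * r + 1 - p) +
      ∑ p ∈ Ico (r + 1 + r / 2) (2 * r + 1 - N), pairTerm s p (2 * r + 1 - p) +
      ∑ p ∈ Ico (2 * r + 1 - N) (2 * r + 1), pairTerm s p (2 * r + 1 - p) := by
    rw [steklovSum, ← Ico_add_one_right_eq_Icc, sum_Ico_consecutive _ (by omega) (by omega),
      sum_Ico_consecutive _ (by omega) (by omega)]
  have hexp : Real.exp (3 / s) ≤ r / 2 := by
    have : (2 * N + 2 : ℝ) ≤ r := by exact_mod_cast hr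
    linarith
  have hhead := sum_Ico_pairTerm_head_le hs (by omega) hexp
  have hmid := sum_Ico_pairTerm_nonpos (r := r) (a := r + 1 + r / 2) (b := 2 * r + 1 - N) hs hN
    (by omega) (by omega)
  have htail := sum_Ico_pairTerm_tail_le hs hr
  have hcube : (r : ℝ) ^ (2 - s) = r ^ (-s - 1) * r ^ 3 := by
    rw [← Real.rpow_natCast, ← Real.rpow_add hr₀]
    congr 1
    push_cast
    ring
  have hpow : (3 * r : ℝ) ^ (-s - 1) ≤ (2 * r + 1) ^ (-s - 1) :=
    Real.rpow_le_rpow_of_nonpos (by positivity) (by linarith) (by linarith)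
  rw [Real.mul_rpow (by norm_num) hr₀.le] at hpow
  have : s * 3 ^ (-s - 1) / 8 * r ^ (2 - s) ≤ s * (2 * r + 1 : ℝ) ^ (-s - 1) * r ^ 3 / 8 := by
    rw [hcube]
    have := mul_le_mul_of_nonneg_left hpow (by positivity : (0 : ℝ) ≤ s * r ^ 3 / 8)
    linarith
  linarith

lemma eventually_steklovSum_neg (hs₀ : 0 < s) (hs₂ : s < 2) :
    ∀ᶠ r in atTop, steklovSum s r < 0 := by
  set N := ⌈Real.exp (3 / s)⌉₊
  have hgrow : Tendsto (fun r : ℕ => 4 * (N : ℝ) ^ 2 - s * 3 ^ (-s - 1) / 8 * (r : ℝ) ^ (2 - s))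
      atTop atBot := by
    simp only [sub_eq_add_neg]
    refine tendsto_atBot_add_const_left _ _ (tendsto_neg_atTop_atBot.comp ?_)
    exact ((tendsto_rpow_atTop (by linarith)).comp tendsto_natCast_atTop_atTop).const_mul_atTop
      (by positivity)
  filter_upwards [hgrow.eventually_lt_atBot 0, eventually_ge_atTop (2 * N + 2)] with r hr hNr
  exact (steklovSum_le hs₀ (Nat.le_ceil _) hNr).trans_lt hr

end SteklovZeta

/-- For every real `s` with `0 < s < 2` there exists a positive integer `rs` such that
for every integer `r ≥ rs` the finite sum
`S_r(s) = ∑_{p=r+1}^{2r} [p(2r+1−p)/(2p−2r−1)] ·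
  (p^{−s}(−1+s ln p) − (2r+1−p)^{−s}(−1+s ln(2r+1−p)))`
is strictly negative. -/
theorem stmt0 (s : ℝ) (hs0 : 0 < s) (hs2 : s < 2) :
    ∃ rs : ℕ, 0 < rs ∧ ∀ r : ℕ, rs ≤ r →
      (∑ p ∈ Finset.Icc (r + 1) (2 * r),
        ((p : ℝ) * (2 * (r : ℝ) + 1 - (p : ℝ)) / (2 * (p : ℝ) - 2 * (r : ℝ) - 1)) *
          ((p : ℝ) ^ (-s) * (-1 + s * Real.log (p : ℝ)) -
            (2 * (r : ℝ) + 1 - (p : ℝ)) ^ (-s) *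
              (-1 + s * Real.log (2 * (r : ℝ) + 1 - (p : ℝ))))) < 0 := by
  obtain ⟨r₀, hr₀⟩ := eventually_atTop.1 (SteklovZeta.eventually_steklovSum_neg hs0 hs2)
  refine ⟨r₀ + 1, r₀.succ_pos, fun r hr => ?_⟩
  convert hr₀ r (by omega) using 1
  refine sum_congr rfl fun p _ => ?_
  rw [SteklovZeta.pairTerm, SteklovZeta.negRpowLog, SteklovZeta.negRpowLog,
    show (p : ℝ) - (2 * r + 1 - p) = 2 * p - 2 * r - 1 by ring]
end

section
/- For every real number s with 0 < s < 2, the function h_s is integrable on the interval (1/2, 1) and lim_{r→∞} S_r(s) / ( (2r+1)^{2−s} · ln(2r+1) ) = s · ∫_{1/2}^{1} h_s(x) dx, where the limit is taken over positive integers r. -/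
/-!
Write `N = 2r + 1`, `φ u = u ^ (-s)`, `ψ u = u ^ (-s) * (-1 + s log u)` (`logRpow s`) and
`q_f x = x (1 - x) / (2x - 1) * (f x - f (1 - x))` (`symmQuot f`), so that `h_s = q_φ`.
Since `ψ (N u) = N ^ (-s) * (ψ u + s log N * φ u)`, the `p`-th summand of `S_r` is
`N ^ (1 - s) * (q_ψ (p / N) + s log N * q_φ (p / N))`, hence
`S_r / (N ^ (2 - s) log N) = s R_r(q_φ) + R_r(q_ψ) / log N`, with `R_r` the right-endpoint
Riemann sum of mesh `1 / N` over `(1/2, 1)`. For `f = φ, ψ`, `q_f` is continuous on `(1/2, 1)`,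
bounded near `1/2` (`f` is Lipschitz there, which cancels the pole of `1 / (2x - 1)`) and
`O((1 - x) ^ (-s/2))` near `1`. As `s / 2 < 1`, this bound dominates the Riemann step functions
by an integrable function, and dominated convergence gives `R_r(q_f) → ∫ q_f`.
-/

open Filter MeasureTheory Set Topology Real

noncomputable def symmQuot (f : ℝ → ℝ) (x : ℝ) : ℝ :=
  x * (1 - x) / (2 * x - 1) * (f x - f (1 - x))

noncomputable def logRpow (s u : ℝ) : ℝ := u ^ (-s) * (-1 + s * log u)

noncomputable def oddRiemannSum (F : ℝ → ℝ) (r : ℕ) : ℝ :=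
  (∑ p ∈ Finset.Icc (r + 1) (2 * r), F (p / (2 * r + 1))) / (2 * r + 1)

lemma logRpow_mul (s : ℝ) {N u : ℝ} (hN : 0 < N) (hu : 0 < u) :
    logRpow s (N * u) = N ^ (-s) * (logRpow s u + s * log N * u ^ (-s)) := by
  rw [logRpow, logRpow, mul_rpow hN.le hu.le, log_mul hN.ne' hu.ne']
  ring

lemma mul_sub_div_mul_logRpow_sub (s : ℝ) {N P : ℝ} (hP : 0 < P) (hPN : P < N) :
    P * (N - P) / (2 * P - N) * (logRpow s P - logRpow s (N - P)) =
      N ^ (1 - s) * (symmQuot (logRpow s) (P / N) +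
        s * log N * symmQuot (fun u => u ^ (-s)) (P / N)) := by
  have hN : 0 < N := hP.trans hPN
  have hP' : P = N * (P / N) := by field_simp
  have hQ : N - P = N * (1 - P / N) := by field_simp
  have hx : 0 < P / N := div_pos hP hN
  have hx' : 0 < 1 - P / N := by rw [sub_pos, div_lt_one hN]; exact hPN
  rw [hQ, logRpow_mul s hN hx', hP', logRpow_mul s hN hx, ← hP', symmQuot, symmQuot,
    rpow_sub hN, rpow_one, rpow_neg hN.le]
  rcases eq_or_ne (2 * P - N) 0 with h | h
  · have : 2 * (P / N) - 1 = 0 := by field_simp; linarith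
    simp [h, this]
  · have : 2 * (P / N) - 1 ≠ 0 := by
      rw [show 2 * (P / N) - 1 = (2 * P - N) / N by field_simp]; exact div_ne_zero h hN.ne'
    field_simp
    ring

lemma sum_logRpow_div_eq_oddRiemannSum (s : ℝ) {r : ℕ} (hr : 1 ≤ r) :
    (∑ p ∈ Finset.Icc (r + 1) (2 * r), (p : ℝ) * (2 * r + 1 - p) / (2 * p - 2 * r - 1) *
        (logRpow s p - logRpow s (2 * r + 1 - p))) / ((2 * r + 1) ^ (2 - s) * log (2 * r + 1)) =
      s * oddRiemannSum (symmQuot fun u => u ^ (-s)) r +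
        oddRiemannSum (symmQuot (logRpow s)) r / log (2 * r + 1) := by
  have hN : (0 : ℝ) < 2 * r + 1 := by positivity
  have hlog : 0 < log (2 * r + 1 : ℝ) := log_pos (by norm_cast; omega)
  have hsum : ∀ p ∈ Finset.Icc (r + 1) (2 * r), (p : ℝ) * (2 * r + 1 - p) / (2 * p - 2 * r - 1) *
      (logRpow s p - logRpow s (2 * r + 1 - p)) = (2 * r + 1 : ℝ) ^ (1 - s) *
        (symmQuot (logRpow s) (p / (2 * r + 1)) +
          s * log (2 * r + 1) * symmQuot (fun u => u ^ (-s)) (p / (2 * r + 1))) := by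
    intro p hp
    rw [Finset.mem_Icc] at hp
    rw [sub_sub]
    exact mul_sub_div_mul_logRpow_sub s (Nat.cast_pos.2 (by omega)) (by norm_cast; omega)
  rw [Finset.sum_congr rfl hsum, ← Finset.mul_sum, Finset.sum_add_distrib, ← Finset.mul_sum,
    oddRiemannSum, oddRiemannSum, show (2 : ℝ) - s = (1 - s) + 1 by ring, rpow_add hN, rpow_one]
  field_simp
  ring

noncomputable def oddGridStep (F : ℝ → ℝ) (r : ℕ) (x : ℝ) : ℝ :=
  ∑ p ∈ Finset.Icc (r + 1) (2 * r),
    (Ioc ((p - 1 : ℝ) / (2 * r + 1)) (p / (2 * r + 1))).indicator (fun _ => F (p / (2 * r + 1))) x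

lemma integrable_indicator_Ioc_const (a b c : ℝ) :
    Integrable ((Ioc a b).indicator fun _ => c) :=
  (integrable_indicator_iff measurableSet_Ioc).2 (integrableOn_const measure_Ioc_lt_top.ne)

lemma integrable_oddGridStep (F : ℝ → ℝ) (r : ℕ) : Integrable (oddGridStep F r) :=
  integrable_finsetSum _ fun _ _ => integrable_indicator_Ioc_const _ _ _

lemma integral_oddGridStep (F : ℝ → ℝ) (r : ℕ) : ∫ x, oddGridStep F r x = oddRiemannSum F r := by
  unfold oddGridStep oddRiemannSum
  rw [integral_finsetSum _ fun _ _ => integrable_indicator_Ioc_const _ _ _, Finset.sum_div]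
  refine Finset.sum_congr rfl fun p _ => ?_
  rw [integral_indicator_const _ measurableSet_Ioc, measureReal_def, volume_Ioc, ← sub_div,
    sub_sub_cancel, ENNReal.toReal_ofReal (by positivity), smul_eq_mul, one_div_mul_eq_div]

lemma mem_Ioc_div_iff_ceil_eq {N : ℝ} (hN : 0 < N) {p : ℕ} (hp : p ≠ 0) (x : ℝ) :
    x ∈ Ioc ((p - 1 : ℝ) / N) (p / N) ↔ ⌈N * x⌉₊ = p := by
  rw [Nat.ceil_eq_iff hp, Nat.cast_sub (Nat.one_le_iff_ne_zero.2 hp), Nat.cast_one, mem_Ioc,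
    div_lt_iff₀' hN, le_div_iff₀' hN]

lemma oddGridStep_eq (F : ℝ → ℝ) (r : ℕ) (x : ℝ) :
    oddGridStep F r x = if ⌈(2 * r + 1) * x⌉₊ ∈ Finset.Icc (r + 1) (2 * r)
      then F (⌈(2 * r + 1) * x⌉₊ / (2 * r + 1)) else 0 := by
  have hN : (0 : ℝ) < 2 * r + 1 := by positivity
  rw [oddGridStep, ← Finset.sum_ite_eq _ _ fun p : ℕ => F (p / (2 * r + 1))]
  refine Finset.sum_congr rfl fun p hp => ?_
  rw [Finset.mem_Icc] at hp
  simp only [indicator_apply, mem_Ioc_div_iff_ceil_eq hN (p := p) (by omega)]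

lemma ceil_mem_Icc_iff (r : ℕ) (x : ℝ) :
    ⌈(2 * r + 1) * x⌉₊ ∈ Finset.Icc (r + 1) (2 * r) ↔
      r < (2 * r + 1) * x ∧ (2 * r + 1) * x ≤ 2 * r := by
  rw [Finset.mem_Icc, Nat.add_one_le_iff, Nat.lt_ceil, Nat.ceil_le]
  push_cast
  rfl

lemma eventually_ceil_mem_Icc_iff {x : ℝ} (hx : x ≠ 1 / 2) : ∀ᶠ r : ℕ in atTop,
    (⌈(2 * r + 1) * x⌉₊ ∈ Finset.Icc (r + 1) (2 * r) ↔ x ∈ Ioo (1 / 2) 1) := by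
  simp only [ceil_mem_Icc_iff, mem_Ioo]
  rcases lt_or_gt_of_ne hx with hlt | hgt
  · filter_upwards [(tendsto_natCast_atTop_atTop (R := ℝ)).eventually_ge_atTop (x / (1 - 2 * x))]
      with r hr
    rw [div_le_iff₀ (by linarith)] at hr
    exact iff_of_false (fun h => by linarith [h.1]) fun h => by linarith [h.1]
  rcases lt_or_ge x 1 with hlt1 | hge1
  · filter_upwards
      [(tendsto_natCast_atTop_atTop (R := ℝ)).eventually_ge_atTop (x / (2 * (1 - x)))] with r hr
    rw [div_le_iff₀ (by linarith)] at hr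
    have : (0 : ℝ) ≤ r := r.cast_nonneg
    exact iff_of_true ⟨by nlinarith, by linarith⟩ ⟨hgt, hlt1⟩
  · refine Eventually.of_forall fun r => iff_of_false (fun h => ?_) fun h => by linarith [h.2]
    have : (0 : ℝ) ≤ r := r.cast_nonneg
    nlinarith [h.2]

lemma tendsto_two_mul_add_one_atTop : Tendsto (fun r : ℕ => (2 * r + 1 : ℝ)) atTop atTop :=
  tendsto_atTop_add_const_right _ 1 (tendsto_natCast_atTop_atTop.const_mul_atTop two_pos)

lemma tendsto_ceil_mul_div {x : ℝ} (hx : 0 < x) :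
    Tendsto (fun r : ℕ => (⌈(2 * r + 1) * x⌉₊ : ℝ) / (2 * r + 1)) atTop (𝓝 x) := by
  have h := (tendsto_nat_ceil_div_atTop.comp
    (tendsto_two_mul_add_one_atTop.atTop_mul_const hx)).const_mul x
  rw [mul_one] at h
  refine h.congr fun r => ?_
  simp only [Function.comp_apply]
  field_simp

lemma tendsto_oddGridStep {F : ℝ → ℝ} (hF : ContinuousOn F (Ioo (1 / 2) 1)) {x : ℝ}
    (hx : x ≠ 1 / 2) :
    Tendsto (fun r => oddGridStep F r x) atTop (𝓝 ((Ioo (1 / 2) 1).indicator F x)) := by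
  have hev : (fun r => oddGridStep F r x) =ᶠ[atTop] fun r =>
      if x ∈ Ioo (1 / 2) 1 then F (⌈(2 * r + 1) * x⌉₊ / (2 * r + 1)) else 0 := by
    filter_upwards [eventually_ceil_mem_Icc_iff hx] with r hr
    rw [oddGridStep_eq, if_congr hr rfl rfl]
  refine Tendsto.congr' hev.symm ?_
  by_cases hmem : x ∈ Ioo (1 / 2) 1
  · simp only [hmem, if_true, indicator_of_mem]
    exact ((hF.continuousAt (isOpen_Ioo.mem_nhds hmem)).tendsto).comp
      (tendsto_ceil_mul_div (by linarith [hmem.1]))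
  · simp only [hmem, if_false, indicator_of_notMem, not_false_eq_true]
    exact tendsto_const_nhds

lemma abs_oddGridStep_le {F : ℝ → ℝ} {K a : ℝ} (hK : 0 ≤ K) (ha : 0 ≤ a)
    (hbound : ∀ y ∈ Ioo (1 / 2) 1, |F y| ≤ K * (1 - y) ^ (-a)) (r : ℕ) (x : ℝ) :
    |oddGridStep F r x| ≤ (Ioo 0 1).indicator (fun x => K * 2 ^ a * (1 - x) ^ (-a)) x := by
  rw [oddGridStep_eq]
  split_ifs with h
  · have hN : (0 : ℝ) < 2 * r + 1 := by positivity
    obtain ⟨hx0, hx1⟩ := (ceil_mem_Icc_iff r x).1 h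
    obtain ⟨hp1, hp2⟩ := Finset.mem_Icc.1 h
    set p := ⌈(2 * r + 1) * x⌉₊
    have hp1' : (r : ℝ) + 1 ≤ p := by exact_mod_cast hp1
    have hp2' : (p : ℝ) ≤ 2 * r := by exact_mod_cast hp2
    have hpx : (p : ℝ) < (2 * r + 1) * x + 1 :=
      Nat.ceil_lt_add_one ((Nat.cast_nonneg r).trans hx0.le)
    have hx : x ∈ Ioo 0 1 := ⟨by nlinarith, by nlinarith⟩
    have hy : (p : ℝ) / (2 * r + 1) ∈ Ioo (1 / 2) 1 :=
      ⟨by rw [lt_div_iff₀ hN]; linarith, by rw [div_lt_one hN]; linarith⟩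
    have hhalf : (1 - x) / 2 ≤ 1 - p / (2 * r + 1) := by
      rw [one_sub_div hN.ne', le_div_iff₀ hN]; nlinarith
    have h2 : ((1 - x) / 2) ^ (-a) = 2 ^ a * (1 - x) ^ (-a) := by
      rw [div_rpow (by linarith [hx.2]) two_pos.le, rpow_neg two_pos.le, div_inv_eq_mul, mul_comm]
    rw [indicator_of_mem hx, mul_assoc, ← h2]
    exact (hbound _ hy).trans (mul_le_mul_of_nonneg_left
      (rpow_le_rpow_of_nonpos (by linarith [hx.2]) hhalf (neg_nonpos.2 ha)) hK)
  · rw [abs_zero]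
    exact indicator_nonneg (fun y hy => by have := hy.2; positivity) x

lemma integrableOn_one_sub_rpow {b : ℝ} (hb : -1 < b) :
    IntegrableOn (fun x : ℝ => (1 - x) ^ b) (Ioo 0 1) := by
  have h := (intervalIntegral.intervalIntegrable_rpow' (a := 1) (b := 0) hb).comp_sub_left 1
  rw [sub_self, sub_zero, intervalIntegrable_iff_integrableOn_Ioo_of_le zero_le_one] at h
  exact h

lemma integrableOn_of_abs_le_rpow {F : ℝ → ℝ} {K a : ℝ} (hF : ContinuousOn F (Ioo (1 / 2) 1))
    (ha : a < 1) (hbound : ∀ y ∈ Ioo (1 / 2) 1, |F y| ≤ K * (1 - y) ^ (-a)) :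
    IntegrableOn F (Ioo (1 / 2) 1) :=
  Integrable.mono' (((integrableOn_one_sub_rpow (by linarith)).mono_set
      (Ioo_subset_Ioo_left (by norm_num))).const_mul K)
    (hF.aestronglyMeasurable measurableSet_Ioo)
    ((ae_restrict_iff' measurableSet_Ioo).2 (ae_of_all _ hbound))

lemma tendsto_oddRiemannSum {F : ℝ → ℝ} {K a : ℝ} (hF : ContinuousOn F (Ioo (1 / 2) 1))
    (hK : 0 ≤ K) (ha0 : 0 ≤ a) (ha1 : a < 1)
    (hbound : ∀ y ∈ Ioo (1 / 2) 1, |F y| ≤ K * (1 - y) ^ (-a)) :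
    Tendsto (oddRiemannSum F) atTop (𝓝 (∫ x in Ioo (1 / 2) 1, F x)) := by
  have hG : Integrable ((Ioo 0 1).indicator fun x : ℝ => K * 2 ^ a * (1 - x) ^ (-a)) :=
    (integrable_indicator_iff measurableSet_Ioo).2
      ((integrableOn_one_sub_rpow (by linarith)).const_mul _)
  have hlim : ∀ᵐ x : ℝ, Tendsto (fun r => oddGridStep F r x) atTop
      (𝓝 ((Ioo (1 / 2) 1).indicator F x)) := by
    filter_upwards [measure_singleton (1 / 2 : ℝ) |> compl_mem_ae_iff.2] with x hx
    exact tendsto_oddGridStep hF hx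
  have h := tendsto_integral_of_dominated_convergence _
    (fun r => (integrable_oddGridStep F r).aestronglyMeasurable) hG
    (fun r => ae_of_all _ fun x => abs_oddGridStep_le hK ha0 hbound r x) hlim
  simpa only [integral_oddGridStep, integral_indicator measurableSet_Ioo] using h

lemma continuousOn_symmQuot {f : ℝ → ℝ} (hf : ContinuousOn f (Ioo 0 1)) :
    ContinuousOn (symmQuot f) (Ioo (1 / 2) 1) := by
  have hsub : MapsTo (fun x : ℝ => 1 - x) (Ioo (1 / 2) 1) (Ioo 0 1) :=
    fun x hx => ⟨by linarith [hx.2], by linarith [hx.1]⟩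
  refine ContinuousOn.mul ?_ ((hf.mono (Ioo_subset_Ioo_left (by norm_num))).sub
    (hf.comp (by fun_prop) hsub))
  exact ContinuousOn.div (by fun_prop) (by fun_prop) fun x hx => by linarith [hx.1]

lemma abs_symmQuot_le_of_abs_sub_le {f : ℝ → ℝ} {L y : ℝ} (hy : y ∈ Ioo (1 / 2) 1)
    (hL : |f y - f (1 - y)| ≤ L * (2 * y - 1)) : |symmQuot f y| ≤ L := by
  obtain ⟨hy1, hy2⟩ := hy
  have hL0 : 0 ≤ L := nonneg_of_mul_nonneg_left ((abs_nonneg _).trans hL) (by linarith)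
  have hw : 0 ≤ y * (1 - y) / (2 * y - 1) := div_nonneg (by nlinarith) (by linarith)
  calc |symmQuot f y| = y * (1 - y) / (2 * y - 1) * |f y - f (1 - y)| := by
        rw [symmQuot, abs_mul, abs_of_nonneg hw]
    _ ≤ y * (1 - y) / (2 * y - 1) * (L * (2 * y - 1)) := mul_le_mul_of_nonneg_left hL hw
    _ = y * (1 - y) * L := by
          rw [mul_comm L, ← mul_assoc, div_mul_cancel₀ _ (by linarith : 2 * y - 1 ≠ 0)]
    _ ≤ L := mul_le_of_le_one_left hL0 (by nlinarith)

lemma abs_symmQuot_le_of_three_quarters_le {f : ℝ → ℝ} {C D y : ℝ} (hy : y ∈ Ico (3 / 4) 1)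
    (hC : |f y| ≤ C) (hD : (1 - y) * |f (1 - y)| ≤ D) : |symmQuot f y| ≤ C + 2 * D := by
  obtain ⟨hy1, hy2⟩ := hy
  have hden : 0 < 2 * y - 1 := by linarith
  have h1 : |y * (1 - y) / (2 * y - 1) * f y| ≤ C := by
    rw [abs_mul, abs_of_nonneg (div_nonneg (by nlinarith) hden.le)]
    exact (mul_le_of_le_one_left (abs_nonneg _) (by rw [div_le_one hden]; nlinarith)).trans hC
  have h2 : |y / (2 * y - 1) * ((1 - y) * f (1 - y))| ≤ 2 * D := by
    rw [abs_mul, abs_mul, abs_of_nonneg (by linarith : 0 ≤ 1 - y),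
      abs_of_pos (div_pos (by linarith) hden)]
    exact mul_le_mul (by rw [div_le_iff₀ hden]; linarith) hD (by positivity) zero_le_two
  have hsplit : symmQuot f y =
      y * (1 - y) / (2 * y - 1) * f y - y / (2 * y - 1) * ((1 - y) * f (1 - y)) := by
    rw [symmQuot]; ring
  rw [hsplit]
  exact (abs_sub _ _).trans (add_le_add h1 h2)

lemma exists_abs_symmQuot_le {f : ℝ → ℝ} {a D : ℝ} (hf : ContDiffOn ℝ 1 f (Ioi 0)) (ha : 0 ≤ a)
    (hnear : ∀ t ∈ Ioc 0 1, t * |f t| ≤ D * t ^ (-a)) :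
    ∃ K, 0 ≤ K ∧ ∀ y ∈ Ioo (1 / 2) 1, |symmQuot f y| ≤ K * (1 - y) ^ (-a) := by
  have hf' : ContDiffOn ℝ 1 f (Icc (1 / 4) 1) :=
    hf.mono fun t ht => lt_of_lt_of_le (by norm_num) ht.1
  obtain ⟨L, hL⟩ := hf'.exists_lipschitzOnWith one_ne_zero (convex_Icc _ _) isCompact_Icc
  have hLip : ∀ u ∈ Icc (1 / 4 : ℝ) 1, ∀ v ∈ Icc (1 / 4 : ℝ) 1, |f u - f v| ≤ L * |u - v| :=
    fun u hu v hv => by simpa only [dist_eq] using hL.dist_le_mul u hu v hv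
  refine ⟨|f 1| + 2 * L + 2 * |D|, by positivity, fun y hy => ?_⟩
  have h1y : 0 < 1 - y := by linarith [hy.2]
  have hone : 1 ≤ (1 - y) ^ (-a) :=
    one_le_rpow_of_pos_of_le_one_of_nonpos h1y (by linarith [hy.1]) (neg_nonpos.2 ha)
  rcases le_or_gt y (3 / 4) with hy' | hy'
  · have hdiff : |f y - f (1 - y)| ≤ L * (2 * y - 1) := by
      have h := hLip y ⟨by linarith [hy.1], by linarith⟩ (1 - y) ⟨by linarith, by linarith [hy.1]⟩
      rwa [abs_of_pos (by linarith [hy.1] : 0 < y - (1 - y)), sub_sub_eq_add_sub, ← two_mul] at h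
    have h := abs_symmQuot_le_of_abs_sub_le hy hdiff
    nlinarith [abs_nonneg (f 1), abs_nonneg D, L.coe_nonneg]
  · have hC : |f y| ≤ |f 1| + L := by
      have h := hLip y ⟨by linarith, hy.2.le⟩ 1 ⟨by norm_num, le_rfl⟩
      rw [abs_sub_comm y, abs_of_pos h1y] at h
      have hL1 : (L : ℝ) * (1 - y) ≤ L := mul_le_of_le_one_right L.coe_nonneg (by linarith)
      linarith [abs_sub_abs_le_abs_sub (f y) (f 1)]
    have hD : (1 - y) * |f (1 - y)| ≤ |D| * (1 - y) ^ (-a) := (hnear _ ⟨h1y, by linarith⟩).trans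
      (mul_le_mul_of_nonneg_right (le_abs_self D) (by positivity))
    have h := abs_symmQuot_le_of_three_quarters_le ⟨hy'.le, hy.2⟩ hC hD
    nlinarith [abs_nonneg (f 1), abs_nonneg D, L.coe_nonneg]

lemma integrableOn_symmQuot {f : ℝ → ℝ} {a D : ℝ} (hf : ContDiffOn ℝ 1 f (Ioi 0)) (ha0 : 0 ≤ a)
    (ha1 : a < 1) (hnear : ∀ t ∈ Ioc 0 1, t * |f t| ≤ D * t ^ (-a)) :
    IntegrableOn (symmQuot f) (Ioo (1 / 2) 1) :=
  let ⟨_, _, hK⟩ := exists_abs_symmQuot_le hf ha0 hnear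
  integrableOn_of_abs_le_rpow (continuousOn_symmQuot (hf.continuousOn.mono Ioo_subset_Ioi_self))
    ha1 hK

lemma tendsto_oddRiemannSum_symmQuot {f : ℝ → ℝ} {a D : ℝ} (hf : ContDiffOn ℝ 1 f (Ioi 0))
    (ha0 : 0 ≤ a) (ha1 : a < 1) (hnear : ∀ t ∈ Ioc 0 1, t * |f t| ≤ D * t ^ (-a)) :
    Tendsto (oddRiemannSum (symmQuot f)) atTop (𝓝 (∫ x in Ioo (1 / 2) 1, symmQuot f x)) :=
  let ⟨_, hK0, hK⟩ := exists_abs_symmQuot_le hf ha0 hnear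
  tendsto_oddRiemannSum (continuousOn_symmQuot (hf.continuousOn.mono Ioo_subset_Ioi_self))
    hK0 ha0 ha1 hK

lemma contDiffOn_rpow_const_Ioi (p : ℝ) : ContDiffOn ℝ 1 (fun u : ℝ => u ^ p) (Ioi 0) :=
  fun _ hu => (contDiffAt_rpow_const_of_ne (ne_of_gt hu)).contDiffWithinAt

lemma contDiffOn_logRpow (s : ℝ) : ContDiffOn ℝ 1 (logRpow s) (Ioi 0) :=
  (contDiffOn_rpow_const_Ioi (-s)).mul (contDiffOn_const.add (contDiffOn_const.mul
    (contDiffOn_log.mono fun _ hu => ne_of_gt hu)))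

lemma mul_rpow_neg_eq {t : ℝ} (ht : 0 < t) (s : ℝ) : t * t ^ (-s) = t ^ (1 - s) := by
  rw [sub_eq_add_neg, rpow_add ht, rpow_one]

lemma rpow_one_sub_le_rpow_neg_half {s t : ℝ} (hs : s ≤ 2) (ht : t ∈ Ioc 0 1) :
    t ^ (1 - s) ≤ t ^ (-(s / 2)) :=
  rpow_le_rpow_of_exponent_ge ht.1 ht.2 (by linarith)

lemma mul_abs_rpow_neg_le {s t : ℝ} (hs : s ≤ 2) (ht : t ∈ Ioc 0 1) :
    t * |t ^ (-s)| ≤ 1 * t ^ (-(s / 2)) := by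
  rw [abs_of_nonneg (rpow_nonneg ht.1.le _), one_mul, mul_rpow_neg_eq ht.1]
  exact rpow_one_sub_le_rpow_neg_half hs ht

lemma mul_abs_logRpow_le {s t : ℝ} (hs0 : 0 ≤ s) (hs2 : s < 2) (ht : t ∈ Ioc 0 1) :
    t * |logRpow s t| ≤ (1 + s / (1 - s / 2)) * t ^ (-(s / 2)) := by
  have hε : 0 < 1 - s / 2 := by linarith
  have hpow : 0 ≤ t ^ (-(s / 2)) := rpow_nonneg ht.1.le _
  have hlog : |log t| * t ^ (1 - s) ≤ 1 / (1 - s / 2) * t ^ (-(s / 2)) :=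
    calc |log t| * t ^ (1 - s) = |log t * t ^ (1 - s / 2)| * t ^ (-(s / 2)) := by
          rw [abs_mul, abs_of_nonneg (rpow_nonneg ht.1.le _), mul_assoc, ← rpow_add ht.1]
          ring_nf
      _ ≤ 1 / (1 - s / 2) * t ^ (-(s / 2)) :=
          mul_le_mul_of_nonneg_right (abs_log_mul_self_rpow_lt t _ ht.1 ht.2 hε).le hpow
  have hsum : |-1 + s * log t| ≤ 1 + s * |log t| := by
    simpa [abs_mul, abs_of_nonneg hs0] using abs_add_le (-1 : ℝ) (s * log t)
  calc t * |logRpow s t| = t ^ (1 - s) * |-1 + s * log t| := by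
        rw [logRpow, abs_mul, abs_of_nonneg (rpow_nonneg ht.1.le _), ← mul_assoc,
          mul_rpow_neg_eq ht.1]
    _ ≤ t ^ (1 - s) * (1 + s * |log t|) :=
        mul_le_mul_of_nonneg_left hsum (rpow_nonneg ht.1.le _)
    _ = t ^ (1 - s) + s * (|log t| * t ^ (1 - s)) := by ring
    _ ≤ t ^ (-(s / 2)) + s * (1 / (1 - s / 2) * t ^ (-(s / 2))) :=
        add_le_add (rpow_one_sub_le_rpow_neg_half hs2.le ht)
          (mul_le_mul_of_nonneg_left hlog hs0)
    _ = (1 + s / (1 - s / 2)) * t ^ (-(s / 2)) := by ring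

/-- For every real `s` with `0 < s < 2`, the function
`h_s(x) = [x(1−x)/(2x−1)]·(x^{−s} − (1−x)^{−s})` is integrable on `(1/2, 1)` and
`S_r(s) / ((2r+1)^{2−s}·ln(2r+1)) → s·∫_{1/2}^1 h_s(x) dx` as the integer `r → ∞`,
where `S_r(s) = ∑_{p=r+1}^{2r} [p(2r+1−p)/(2p−2r−1)] ·
  (p^{−s}(−1+s ln p) − (2r+1−p)^{−s}(−1+s ln(2r+1−p)))`. -/
theorem stmt1 (s : ℝ) (hs0 : 0 < s) (hs2 : s < 2) :
    MeasureTheory.IntegrableOn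
        (fun x : ℝ => x * (1 - x) / (2 * x - 1) * (x ^ (-s) - (1 - x) ^ (-s)))
        (Set.Ioo (1 / 2 : ℝ) 1) ∧
      Filter.Tendsto
        (fun r : ℕ =>
          (∑ p ∈ Finset.Icc (r + 1) (2 * r),
            ((p : ℝ) * (2 * (r : ℝ) + 1 - (p : ℝ)) / (2 * (p : ℝ) - 2 * (r : ℝ) - 1)) *
              ((p : ℝ) ^ (-s) * (-1 + s * Real.log (p : ℝ)) -
                (2 * (r : ℝ) + 1 - (p : ℝ)) ^ (-s) *
                  (-1 + s * Real.log (2 * (r : ℝ) + 1 - (p : ℝ))))) /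
            ((2 * (r : ℝ) + 1) ^ (2 - s) * Real.log (2 * (r : ℝ) + 1)))
        Filter.atTop
        (nhds (s * ∫ x in Set.Ioo (1 / 2 : ℝ) 1,
          x * (1 - x) / (2 * x - 1) * (x ^ (-s) - (1 - x) ^ (-s)))) := by
  have ha0 : 0 ≤ s / 2 := by linarith
  have ha1 : s / 2 < 1 := by linarith
  have hφ : ∀ t ∈ Ioc (0 : ℝ) 1, t * |t ^ (-s)| ≤ 1 * t ^ (-(s / 2)) :=
    fun t ht => mul_abs_rpow_neg_le hs2.le ht
  have hψ : ∀ t ∈ Ioc (0 : ℝ) 1, t * |logRpow s t| ≤ (1 + s / (1 - s / 2)) * t ^ (-(s / 2)) :=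
    fun t ht => mul_abs_logRpow_le hs0.le hs2 ht
  refine ⟨integrableOn_symmQuot (contDiffOn_rpow_const_Ioi (-s)) ha0 ha1 hφ, ?_⟩
  have hφlim := tendsto_oddRiemannSum_symmQuot (contDiffOn_rpow_const_Ioi (-s)) ha0 ha1 hφ
  have hψlim := tendsto_oddRiemannSum_symmQuot (contDiffOn_logRpow s) ha0 ha1 hψ
  have hlog := tendsto_log_atTop.comp tendsto_two_mul_add_one_atTop
  have h := (hφlim.const_mul s).add (hψlim.div_atTop hlog)
  rw [add_zero] at h
  refine h.congr' ?_
  filter_upwards [eventually_ge_atTop 1] with r hr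
  exact (sum_logRpow_div_eq_oddRiemannSum s hr).symm
end

section
/- For every real number s with 0 < s < 2, the function h_s is integrable on (1/2,1) and lim_{r→∞} (1/(2r+1)) · ∑_{p=r+1}^{2r} h_s( p/(2r+1) ) = ∫_{1/2}^{1} h_s(x) dx, where the limit is taken over positive integers r. -/
open Filter Finset MeasureTheory Topology

/-!
The Riemann sum is the integral over `(1/2, 1)` of the step function equal to `h_s(p/(2r+1))`
on `[p/(2r+1), (p+1)/(2r+1))`. Each step function takes at `x` a value `h_s(y)` with `y ≤ x`,
so dominated convergence applies once `|h_s(y)| ≤ G(x)` for all `1/2 < y ≤ x < 1` with `G`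
integrable. Near `1/2` the singularity of `h_s` is removable, as `|x^{-s} - (1-x)^{-s}| ≲ s(2x-1)`
by the mean value theorem; near `1`, `|h_s(y)| ≲ 1 + (1-y)^{1-s}`. So `G` can be a constant plus
`2(1-x)^{1-s}`, which is integrable because `s < 2`.
-/

section RiemannSum

variable (φ : ℝ → ℝ) (r : ℕ)

noncomputable def riemannStep (x : ℝ) : ℝ :=
  ∑ p ∈ Icc (r + 1) (2 * r),
    (Set.Ico ((p : ℝ) / (2 * r + 1)) ((p + 1) / (2 * r + 1))).indicator
      (fun _ => φ (p / (2 * r + 1))) x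

lemma mem_Ico_div_iff_floor_eq {x n : ℝ} (hx : 0 ≤ x) (hn : 0 < n) (p : ℕ) :
    x ∈ Set.Ico (p / n) ((p + 1) / n) ↔ ⌊x * n⌋₊ = p := by
  rw [Nat.floor_eq_iff (by positivity), Set.mem_Ico, div_le_iff₀ hn, lt_div_iff₀ hn]

lemma half_lt_succ_div_two_mul_add_one : (1 / 2 : ℝ) < (r + 1) / (2 * r + 1) := by
  rw [div_lt_div_iff₀ (by norm_num) (by positivity)]
  linarith

lemma riemannStep_of_lt {x : ℝ} (hx : x < (r + 1) / (2 * r + 1)) : riemannStep φ r x = 0 := by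
  refine Finset.sum_eq_zero fun p hp => Set.indicator_of_notMem (fun hmem => ?_) _
  have hp : (r : ℝ) + 1 ≤ p := by exact_mod_cast (Finset.mem_Icc.1 hp).1
  have : (r + 1) / (2 * r + 1) ≤ (p : ℝ) / (2 * r + 1) := by gcongr
  linarith [hmem.1]

lemma floor_mul_mem_Icc {x : ℝ} (hx : (r + 1) / (2 * r + 1) ≤ x) (hx' : x < 1) :
    ⌊x * (2 * r + 1)⌋₊ ∈ Icc (r + 1) (2 * r) := by
  have hn : (0 : ℝ) < 2 * r + 1 := by positivity
  rw [div_le_iff₀ hn] at hx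
  refine Finset.mem_Icc.2 ⟨Nat.le_floor (by exact_mod_cast hx), Nat.lt_succ_iff.1 ?_⟩
  rw [Nat.floor_lt (by nlinarith)]
  push_cast
  nlinarith

lemma riemannStep_of_le {x : ℝ} (hx : (r + 1) / (2 * r + 1) ≤ x) (hx' : x < 1) :
    riemannStep φ r x = φ (⌊x * (2 * r + 1)⌋₊ / (2 * r + 1)) := by
  have hn : (0 : ℝ) < 2 * r + 1 := by positivity
  have hx0 : 0 ≤ x := le_trans (by positivity) hx
  rw [riemannStep, Finset.sum_eq_single_of_mem _ (floor_mul_mem_Icc r hx hx')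
    fun q _ hq => Set.indicator_of_notMem
      (fun h => hq ((mem_Ico_div_iff_floor_eq hx0 hn q).1 h).symm) _]
  exact Set.indicator_of_mem ((mem_Ico_div_iff_floor_eq hx0 hn _).2 rfl) _

lemma eventually_succ_div_two_mul_add_one_le {x : ℝ} (hx : 1 / 2 < x) :
    ∀ᶠ r : ℕ in atTop, ((r : ℝ) + 1) / (2 * r + 1) ≤ x := by
  obtain ⟨N, hN⟩ := exists_nat_gt ((1 - x) / (2 * x - 1))
  filter_upwards [eventually_ge_atTop N] with r hr
  rw [div_lt_iff₀ (by linarith)] at hN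
  have hNr : (N : ℝ) ≤ r := by exact_mod_cast hr
  rw [div_le_iff₀ (by positivity)]
  nlinarith

lemma measurable_riemannStep : Measurable (riemannStep φ r) :=
  Finset.measurable_sum _ fun _ _ => measurable_const.indicator measurableSet_Ico

lemma integral_riemannStep :
    ∫ x in Set.Ioo (1 / 2) 1, riemannStep φ r x =
      1 / (2 * r + 1) * ∑ p ∈ Icc (r + 1) (2 * r), φ (p / (2 * r + 1)) := by
  have hn : (0 : ℝ) < 2 * r + 1 := by positivity
  have hsub : ∀ p ∈ Icc (r + 1) (2 * r),
      Set.Ico ((p : ℝ) / (2 * r + 1)) ((p + 1) / (2 * r + 1)) ⊆ Set.Ioo (1 / 2) 1 := by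
    intro p hp
    have hp₁ : (r : ℝ) + 1 ≤ p := by exact_mod_cast (Finset.mem_Icc.1 hp).1
    have hp₂ : (p : ℝ) ≤ 2 * r := by exact_mod_cast (Finset.mem_Icc.1 hp).2
    refine Set.Ico_subset_Ioo_left ?_ |>.trans (Set.Ioo_subset_Ioo_right ?_)
    · exact (half_lt_succ_div_two_mul_add_one r).trans_le (by gcongr)
    · rw [div_le_one hn]; linarith
  simp only [riemannStep]
  rw [integral_finsetSum _ fun p _ =>
      (integrable_indicator_iff measurableSet_Ico).2 (integrableOn_const (by finiteness)),
    Finset.mul_sum]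
  refine Finset.sum_congr rfl fun p hp => ?_
  rw [integral_indicator_const _ measurableSet_Ico, measureReal_restrict_apply measurableSet_Ico,
    Set.inter_eq_self_of_subset_left (hsub p hp), Real.volume_real_Ico_of_le (by gcongr; linarith),
    smul_eq_mul]
  field_simp
  ring

variable {φ} {G : ℝ → ℝ}

lemma integrableOn_of_abs_le_majorant (hφ : ContinuousOn φ (Set.Ioo (1 / 2) 1))
    (hG : IntegrableOn G (Set.Ioo (1 / 2) 1))
    (hφG : ∀ x y, 1 / 2 < y → y ≤ x → x < 1 → |φ y| ≤ G x) :
    IntegrableOn φ (Set.Ioo (1 / 2) 1) :=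
  hG.mono' (hφ.aestronglyMeasurable measurableSet_Ioo) <|
    (ae_restrict_iff' measurableSet_Ioo).2 <| .of_forall fun x hx => hφG x x hx.1 le_rfl hx.2

lemma abs_riemannStep_le (hφG : ∀ x y, 1 / 2 < y → y ≤ x → x < 1 → |φ y| ≤ G x) (r : ℕ)
    {x : ℝ} (hx : x ∈ Set.Ioo (1 / 2) 1) : |riemannStep φ r x| ≤ G x := by
  rcases lt_or_ge x ((r + 1) / (2 * r + 1)) with hxr | hxr
  · rw [riemannStep_of_lt φ r hxr, abs_zero]
    exact (abs_nonneg _).trans (hφG x x hx.1 le_rfl hx.2)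
  · rw [riemannStep_of_le φ r hxr hx.2]
    have hn : (0 : ℝ) < 2 * r + 1 := by positivity
    have hp : (r : ℝ) + 1 ≤ ⌊x * (2 * r + 1)⌋₊ := by
      exact_mod_cast (Finset.mem_Icc.1 (floor_mul_mem_Icc r hxr hx.2)).1
    refine hφG x _ ((half_lt_succ_div_two_mul_add_one r).trans_le (by gcongr)) ?_ hx.2
    rw [div_le_iff₀ hn]
    exact Nat.floor_le (mul_nonneg (by linarith [hx.1]) hn.le)

lemma tendsto_riemannStep {x : ℝ} (hx : x ∈ Set.Ioo (1 / 2) 1) (hφx : ContinuousAt φ x) :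
    Tendsto (fun r => riemannStep φ r x) atTop (𝓝 (φ x)) := by
  have hn : Tendsto (fun r : ℕ => 2 * (r : ℝ) + 1) atTop atTop :=
    tendsto_atTop_add_const_right _ 1 (tendsto_natCast_atTop_atTop.const_mul_atTop two_pos)
  have hfloor := (tendsto_nat_floor_mul_div_atTop (a := x) (by linarith [hx.1])).comp hn
  exact (hφx.tendsto.comp hfloor).congr' ((eventually_succ_div_two_mul_add_one_le hx.1).mono
    fun r hr => (riemannStep_of_le φ r hr hx.2).symm)

lemma tendsto_riemannSum_of_abs_le_majorant (hφ : ContinuousOn φ (Set.Ioo (1 / 2) 1))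
    (hG : IntegrableOn G (Set.Ioo (1 / 2) 1))
    (hφG : ∀ x y, 1 / 2 < y → y ≤ x → x < 1 → |φ y| ≤ G x) :
    Tendsto (fun r : ℕ => 1 / (2 * (r : ℝ) + 1) * ∑ p ∈ Icc (r + 1) (2 * r), φ (p / (2 * r + 1)))
      atTop (𝓝 (∫ x in Set.Ioo (1 / 2) 1, φ x)) := by
  simp_rw [← integral_riemannStep]
  refine tendsto_integral_of_dominated_convergence G
    (fun r => (measurable_riemannStep φ r).aestronglyMeasurable) hG (fun r => ?_) ?_
  · exact (ae_restrict_iff' measurableSet_Ioo).2 <| .of_forall fun x hx =>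
      (Real.norm_eq_abs _).trans_le (abs_riemannStep_le hφG r hx)
  · exact (ae_restrict_iff' measurableSet_Ioo).2 <| .of_forall fun x hx =>
      tendsto_riemannStep hx (hφ.continuousAt (Ioo_mem_nhds hx.1 hx.2))

end RiemannSum

lemma abs_rpow_sub_rpow_le {p c u v : ℝ} (hp : p ≤ 1) (hc : 0 < c) (hu : c ≤ u) (hv : c ≤ v) :
    |v ^ p - u ^ p| ≤ |p| * c ^ (p - 1) * |v - u| := by
  have hderiv : ∀ t ∈ Set.Ici c,
      HasDerivWithinAt (fun t : ℝ => t ^ p) (p * t ^ (p - 1)) (Set.Ici c) t :=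
    fun t ht => (Real.hasDerivAt_rpow_const (Or.inl (hc.trans_le ht).ne')).hasDerivWithinAt
  have hbound : ∀ t ∈ Set.Ici c, ‖p * t ^ (p - 1)‖ ≤ |p| * c ^ (p - 1) := fun t ht => by
    rw [Real.norm_eq_abs, abs_mul, abs_of_nonneg (Real.rpow_nonneg (hc.trans_le ht).le _)]
    exact mul_le_mul_of_nonneg_left (Real.rpow_le_rpow_of_nonpos hc ht (by linarith))
      (abs_nonneg p)
  exact (convex_Ici c).norm_image_sub_le_of_norm_hasDerivWithin_le hderiv hbound hu hv

lemma rpow_le_one_add_rpow {a b t : ℝ} (hb : 0 < b) (hba : b ≤ a) (ha : a ≤ 1) :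
    a ^ t ≤ 1 + b ^ t := by
  rcases le_total 0 t with ht | ht
  · linarith [Real.rpow_le_one (hb.trans_le hba).le ha ht, Real.rpow_nonneg hb.le t]
  · linarith [Real.rpow_le_rpow_of_nonpos hb hba ht]

noncomputable def hFun (s x : ℝ) : ℝ :=
  x * (1 - x) / (2 * x - 1) * (x ^ (-s) - (1 - x) ^ (-s))

lemma continuousOn_hFun (s : ℝ) : ContinuousOn (hFun s) (Set.Ioo (1 / 2) 1) := by
  rintro x ⟨hx, hx'⟩
  apply ContinuousAt.continuousWithinAt
  unfold hFun
  fun_prop (disch := first | (left; linarith) | (intro h; linarith))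

lemma abs_hFun_le_of_le_three_quarters {s y : ℝ} (hs : 0 ≤ s) (hy : 1 / 2 < y)
    (hy' : y ≤ 3 / 4) : |hFun s y| ≤ s * 4 ^ (s + 1) := by
  have hlip := abs_rpow_sub_rpow_le (p := -s) (c := 1 / 4) (u := 1 - y) (v := y)
    (by linarith) (by norm_num) (by linarith) (by linarith)
  have hquarter : (1 / 4 : ℝ) ^ (-s - 1) = 4 ^ (s + 1) := by
    rw [show -s - 1 = -(s + 1) by ring, Real.rpow_neg (by norm_num), ← Real.inv_rpow (by norm_num)]
    norm_num
  have hden : 0 < 2 * y - 1 := by linarith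
  rw [abs_neg, abs_of_nonneg hs, hquarter, show y - (1 - y) = 2 * y - 1 by ring,
    abs_of_pos hden] at hlip
  unfold hFun
  rw [abs_mul, abs_of_nonneg (div_nonneg (by nlinarith) hden.le)]
  calc y * (1 - y) / (2 * y - 1) * |y ^ (-s) - (1 - y) ^ (-s)|
      ≤ y * (1 - y) / (2 * y - 1) * (s * 4 ^ (s + 1) * (2 * y - 1)) := by
        gcongr
        exact div_nonneg (by nlinarith) hden.le
    _ = s * 4 ^ (s + 1) * (y * (1 - y)) := by
        rw [mul_left_comm, div_mul_cancel₀ _ hden.ne', mul_comm]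
    _ ≤ s * 4 ^ (s + 1) := mul_le_of_le_one_right (by positivity) (by nlinarith)

lemma abs_hFun_le_of_three_quarters_lt {s y : ℝ} (hs : 0 ≤ s) (hy : 3 / 4 < y) (hy' : y < 1) :
    |hFun s y| ≤ 2 * 2 ^ s + 2 * (1 - y) ^ (1 - s) := by
  have hcoef : y * (1 - y) / (2 * y - 1) ≤ 2 * (1 - y) := by
    rw [div_le_iff₀ (by linarith)]; nlinarith
  have hyneg : y ^ (-s) ≤ 2 ^ s := by
    rw [Real.rpow_neg (by linarith), ← Real.inv_rpow (by linarith)]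
    exact Real.rpow_le_rpow (by positivity) (inv_le_of_inv_le₀ (by norm_num) (by linarith)) hs
  have hsplit : (1 - y) * (1 - y) ^ (-s) = (1 - y) ^ (1 - s) := by
    rw [sub_eq_add_neg 1 s, Real.rpow_add (by linarith), Real.rpow_one]
  have hA := Real.rpow_nonneg (by linarith : 0 ≤ y) (-s)
  have hB := Real.rpow_nonneg (by linarith : 0 ≤ 1 - y) (-s)
  unfold hFun
  rw [abs_mul, abs_of_nonneg (div_nonneg (by nlinarith) (by linarith))]
  calc y * (1 - y) / (2 * y - 1) * |y ^ (-s) - (1 - y) ^ (-s)|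
      ≤ 2 * (1 - y) * (y ^ (-s) + (1 - y) ^ (-s)) := by
        gcongr
        exact abs_sub_le_iff.2 ⟨by linarith, by linarith⟩
    _ = 2 * (1 - y) * y ^ (-s) + 2 * ((1 - y) * (1 - y) ^ (-s)) := by ring
    _ ≤ 2 * 2 ^ s + 2 * (1 - y) ^ (1 - s) := by
        rw [hsplit]
        gcongr
        nlinarith

noncomputable def hMajorant (s x : ℝ) : ℝ :=
  s * 4 ^ (s + 1) + 2 * 2 ^ s + 2 + 2 * (1 - x) ^ (1 - s)

lemma abs_hFun_le_hMajorant {s x y : ℝ} (hs : 0 ≤ s) (hy : 1 / 2 < y) (hyx : y ≤ x)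
    (hx : x < 1) : |hFun s y| ≤ hMajorant s x := by
  have hpow : (1 - y) ^ (1 - s) ≤ 1 + (1 - x) ^ (1 - s) :=
    rpow_le_one_add_rpow (by linarith) (by linarith) (by linarith)
  have h4 : 0 ≤ s * 4 ^ (s + 1) := by positivity
  have h2 : 0 ≤ (2 : ℝ) ^ s := by positivity
  have h1 := Real.rpow_nonneg (by linarith : 0 ≤ 1 - x) (1 - s)
  unfold hMajorant
  rcases le_or_gt y (3 / 4) with hy' | hy'
  · linarith [abs_hFun_le_of_le_three_quarters hs hy hy']
  · linarith [abs_hFun_le_of_three_quarters_lt hs hy' (hyx.trans_lt hx)]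

lemma integrableOn_hMajorant {s : ℝ} (hs : s < 2) :
    IntegrableOn (hMajorant s) (Set.Ioo (1 / 2) 1) := by
  have hpow : IntervalIntegrable (fun x : ℝ => (1 - x) ^ (1 - s)) volume (1 / 2) 1 := by
    have h := (intervalIntegral.intervalIntegrable_rpow' (a := 1 / 2) (b := 0)
      (by linarith : -1 < 1 - s)).comp_sub_left 1
    norm_num at h
    exact h
  exact (integrableOn_const (by simp [Real.volume_Ioo])).add
    ((hpow.1.mono_set Set.Ioo_subset_Ioc_self).const_mul 2)

/-- For every real `s` with `0 < s < 2`, the function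
`h_s(x) = [x(1−x)/(2x−1)]·(x^{−s} − (1−x)^{−s})` is integrable on `(1/2, 1)` and
`(1/(2r+1)) · ∑_{p=r+1}^{2r} h_s(p/(2r+1)) → ∫_{1/2}^1 h_s(x) dx` as the integer `r → ∞`. -/
theorem stmt3 (s : ℝ) (hs0 : 0 < s) (hs2 : s < 2) :
    MeasureTheory.IntegrableOn
        (fun x : ℝ => x * (1 - x) / (2 * x - 1) * (x ^ (-s) - (1 - x) ^ (-s)))
        (Set.Ioo (1 / 2 : ℝ) 1) ∧
      Filter.Tendsto
        (fun r : ℕ => (1 / (2 * (r : ℝ) + 1)) *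
          ∑ p ∈ Finset.Icc (r + 1) (2 * r),
            (fun x : ℝ => x * (1 - x) / (2 * x - 1) * (x ^ (-s) - (1 - x) ^ (-s)))
              ((p : ℝ) / (2 * (r : ℝ) + 1)))
        Filter.atTop
        (nhds (∫ x in Set.Ioo (1 / 2 : ℝ) 1,
          x * (1 - x) / (2 * x - 1) * (x ^ (-s) - (1 - x) ^ (-s)))) := by
  have hcont := continuousOn_hFun s
  have hmaj := integrableOn_hMajorant hs2
  have hbound : ∀ x y, 1 / 2 < y → y ≤ x → x < 1 → |hFun s y| ≤ hMajorant s x :=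
    fun _ _ => abs_hFun_le_hMajorant hs0.le
  exact ⟨integrableOn_of_abs_le_majorant hcont hmaj hbound,
    tendsto_riemannSum_of_abs_le_majorant hcont hmaj hbound⟩
end

section
/- For every real number s > 2, the series ∑_{p=1}^{∞} p^{1−s}(1 − s·ln p) converges absolutely, and lim_{r→∞} ∑_{p=1}^{2r} [(2r+1−p)/(2p−2r−1)] · p^{1−s}(−1 + s·ln p) = ∑_{p=1}^{∞} p^{1−s}(1 − s·ln p), where the limit is taken over positive integers r. -/
/-!
Since `2r + 1 - p = -(2p - 2r - 1) + p`, the sum splits into the partial sum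
`∑_{p ≤ 2r} p^{1-s}(1 - s log p)`, which tends to the series, and an error
`∑_{p ≤ 2r} p a_p / (2p - 2r - 1)` with `|p a_p| ≤ C p^{-δ}`, `δ = (s - 2)/2`, because
`log p ≤ p^δ / δ`; the same bound gives absolute convergence. In the error, the terms with
`2p ≥ r` have `p^{-δ} ≤ (r/2)^{-δ}`, and `∑ 1/|2p - 2r - 1|` runs twice over the reciprocals of
the odd numbers below `2r`, hence is `O(log r)`; the terms with `2p < r` have denominator
larger than `r`, so they are bounded by a Cesàro mean of `p^{-δ}`, which tends to `0`.
-/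

open Filter Finset Real Topology

lemma sum_Icc_one_eq_sum_range {M : Type*} [AddCommMonoid M] (f : ℕ → M) (n : ℕ) :
    ∑ p ∈ Icc 1 n, f p = ∑ k ∈ range n, f (k + 1) := by
  rw [← Ico_add_one_right_eq_Icc, sum_Ico_eq_sum_range, Nat.add_sub_cancel]
  simp only [add_comm]

lemma sum_Icc_one_two_mul_eq_sum_range {M : Type*} [AddCommMonoid M] (f : ℕ → M) (r : ℕ) :
    ∑ p ∈ Icc 1 (2 * r), f p = ∑ k ∈ range r, (f (r - k) + f (r + 1 + k)) := by
  have hsplit : Icc 1 (2 * r) = Icc 1 r ∪ Icc (r + 1) (2 * r) := by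
    ext p; simp only [mem_Icc, mem_union]; omega
  have hdisj : Disjoint (Icc 1 r) (Icc (r + 1) (2 * r)) := by
    simp only [disjoint_left, mem_Icc]; omega
  rw [hsplit, sum_union hdisj, sum_add_distrib, sum_Icc_one_eq_sum_range, ← sum_range_reflect,
    ← Ico_add_one_right_eq_Icc, sum_Ico_eq_sum_range, show 2 * r + 1 - (r + 1) = r by omega]
  congr 1
  exact sum_congr rfl fun k hk => congrArg f (by have := mem_range.1 hk; omega)

lemma one_le_abs_two_mul_sub_two_mul_sub_one (p r : ℕ) : 1 ≤ |2 * (p : ℝ) - 2 * r - 1| := by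
  rcases le_or_gt p r with h | h
  · have h' : (p : ℝ) ≤ r := by exact_mod_cast h
    rw [abs_of_neg (by linarith)]; linarith
  · have h' : (r : ℝ) + 1 ≤ p := by exact_mod_cast h
    rw [abs_of_pos (by linarith)]; linarith

lemma sum_Icc_inv_abs_two_mul_sub_le (r : ℕ) :
    ∑ p ∈ Icc 1 (2 * r), |2 * (p : ℝ) - 2 * r - 1|⁻¹ ≤ 2 * (1 + log r) :=
  calc ∑ p ∈ Icc 1 (2 * r), |2 * (p : ℝ) - 2 * r - 1|⁻¹
      = ∑ k ∈ range r, 2 * (2 * (k : ℝ) + 1)⁻¹ := by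
        rw [sum_Icc_one_two_mul_eq_sum_range]
        refine sum_congr rfl fun k hk => ?_
        rw [Nat.cast_sub (mem_range.1 hk).le]
        push_cast
        have hk0 : (0 : ℝ) ≤ k := k.cast_nonneg
        rw [abs_of_neg (by linarith), abs_of_pos (by linarith)]
        ring
    _ ≤ ∑ k ∈ range r, 2 * ((k : ℝ) + 1)⁻¹ := by
        gcongr with k; linarith [(Nat.cast_nonneg k : (0 : ℝ) ≤ k)]
    _ = 2 * harmonic r := by simp [harmonic, mul_sum]
    _ ≤ 2 * (1 + log r) := by gcongr; exact harmonic_le_one_add_log r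

lemma tendsto_rpow_neg_mul_one_add_log {δ : ℝ} (hδ : 0 < δ) :
    Tendsto (fun x : ℝ => x ^ (-δ) * (1 + log x)) atTop (𝓝 0) := by
  have h := (tendsto_rpow_neg_atTop hδ).add (isLittleO_log_rpow_atTop hδ).tendsto_div_nhds_zero
  rw [add_zero] at h
  refine h.congr' ?_
  filter_upwards [eventually_ge_atTop 0] with x hx
  rw [rpow_neg hx]
  ring

lemma tendsto_inv_mul_sum_Icc_rpow_neg {δ : ℝ} (hδ : 0 < δ) :
    Tendsto (fun r : ℕ => (r : ℝ)⁻¹ * ∑ p ∈ Icc 1 (2 * r), (p : ℝ) ^ (-δ)) atTop (𝓝 0) := by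
  have hu : Tendsto (fun k : ℕ => ((k + 1 : ℕ) : ℝ) ^ (-δ)) atTop (𝓝 0) :=
    (tendsto_rpow_neg_atTop hδ).comp
      (tendsto_natCast_atTop_atTop.comp (tendsto_add_atTop_nat 1))
  have h := (hu.cesaro.comp (tendsto_id.const_mul_atTop' two_pos)).const_mul 2
  rw [mul_zero] at h
  refine h.congr fun r => ?_
  simp only [Function.comp_apply, id, sum_Icc_one_eq_sum_range, Nat.cast_mul, mul_inv]
  ring

lemma rpow_neg_div_abs_two_mul_sub_le {δ : ℝ} (hδ : 0 ≤ δ) {p r : ℕ} (hp : 1 ≤ p) (hr : 1 ≤ r) :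
    (p : ℝ) ^ (-δ) / |2 * (p : ℝ) - 2 * r - 1|
      ≤ 2 ^ δ * (r : ℝ) ^ (-δ) * |2 * (p : ℝ) - 2 * r - 1|⁻¹ + (r : ℝ)⁻¹ * (p : ℝ) ^ (-δ) := by
  have hp0 : (0 : ℝ) < p := by exact_mod_cast hp
  have hr0 : (0 : ℝ) < r := by exact_mod_cast hr
  rcases le_or_gt (r : ℝ) (2 * p) with h | h
  · have hpr : (p : ℝ) ^ (-δ) ≤ 2 ^ δ * (r : ℝ) ^ (-δ) :=
      calc (p : ℝ) ^ (-δ) ≤ ((r : ℝ) / 2) ^ (-δ) :=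
            rpow_le_rpow_of_nonpos (by positivity) (by linarith) (by linarith)
        _ = 2 ^ δ * (r : ℝ) ^ (-δ) := by
            rw [div_rpow hr0.le zero_le_two, rpow_neg zero_le_two, div_inv_eq_mul, mul_comm]
    calc (p : ℝ) ^ (-δ) / |2 * (p : ℝ) - 2 * r - 1|
        = (p : ℝ) ^ (-δ) * |2 * (p : ℝ) - 2 * r - 1|⁻¹ := div_eq_mul_inv _ _
      _ ≤ 2 ^ δ * (r : ℝ) ^ (-δ) * |2 * (p : ℝ) - 2 * r - 1|⁻¹ := by gcongr
      _ ≤ _ := le_add_of_nonneg_right (by positivity)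
  · have hrD : (r : ℝ) ≤ |2 * (p : ℝ) - 2 * r - 1| := by
      rw [abs_of_neg (by linarith)]; linarith
    calc (p : ℝ) ^ (-δ) / |2 * (p : ℝ) - 2 * r - 1| ≤ (p : ℝ) ^ (-δ) / r := by gcongr
      _ = (r : ℝ)⁻¹ * (p : ℝ) ^ (-δ) := div_eq_inv_mul _ _
      _ ≤ _ := le_add_of_nonneg_left (by positivity)

lemma tendsto_sum_Icc_rpow_neg_div_abs {δ : ℝ} (hδ : 0 < δ) :
    Tendsto (fun r : ℕ => ∑ p ∈ Icc 1 (2 * r), (p : ℝ) ^ (-δ) / |2 * (p : ℝ) - 2 * r - 1|)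
      atTop (𝓝 0) := by
  have hlog := ((tendsto_rpow_neg_mul_one_add_log hδ).comp tendsto_natCast_atTop_atTop).const_mul
    (2 ^ δ * 2)
  have hbound := hlog.add (tendsto_inv_mul_sum_Icc_rpow_neg hδ)
  rw [mul_zero, add_zero] at hbound
  refine squeeze_zero' (Eventually.of_forall fun r => sum_nonneg fun p _ => by positivity) ?_ hbound
  filter_upwards [eventually_ge_atTop 1] with r hr
  calc ∑ p ∈ Icc 1 (2 * r), (p : ℝ) ^ (-δ) / |2 * (p : ℝ) - 2 * r - 1|
      ≤ ∑ p ∈ Icc 1 (2 * r), (2 ^ δ * (r : ℝ) ^ (-δ) * |2 * (p : ℝ) - 2 * r - 1|⁻¹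
          + (r : ℝ)⁻¹ * (p : ℝ) ^ (-δ)) :=
        sum_le_sum fun p hp => rpow_neg_div_abs_two_mul_sub_le hδ.le (mem_Icc.1 hp).1 hr
    _ = 2 ^ δ * (r : ℝ) ^ (-δ) * ∑ p ∈ Icc 1 (2 * r), |2 * (p : ℝ) - 2 * r - 1|⁻¹
          + (r : ℝ)⁻¹ * ∑ p ∈ Icc 1 (2 * r), (p : ℝ) ^ (-δ) := by
        rw [sum_add_distrib, mul_sum, mul_sum]
    _ ≤ 2 ^ δ * (r : ℝ) ^ (-δ) * (2 * (1 + log r))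
          + (r : ℝ)⁻¹ * ∑ p ∈ Icc 1 (2 * r), (p : ℝ) ^ (-δ) := by
        gcongr; exact sum_Icc_inv_abs_two_mul_sub_le r
    _ = _ := by simp only [Function.comp_apply]; ring

lemma tendsto_sum_Icc_div_two_mul_sub_of_abs_le {a : ℕ → ℝ} {C δ : ℝ} (hδ : 0 < δ)
    (ha : ∀ p, 1 ≤ p → |a p| ≤ C * (p : ℝ) ^ (-δ)) :
    Tendsto (fun r : ℕ => ∑ p ∈ Icc 1 (2 * r), a p / (2 * (p : ℝ) - 2 * r - 1)) atTop (𝓝 0) := by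
  have h := (tendsto_sum_Icc_rpow_neg_div_abs hδ).const_mul C
  rw [mul_zero] at h
  refine squeeze_zero_norm (fun r => ?_) h
  calc ‖∑ p ∈ Icc 1 (2 * r), a p / (2 * (p : ℝ) - 2 * r - 1)‖
      ≤ ∑ p ∈ Icc 1 (2 * r), |a p| / |2 * (p : ℝ) - 2 * r - 1| := by
        simpa only [Real.norm_eq_abs, abs_div] using
          norm_sum_le (Icc 1 (2 * r)) fun p => a p / (2 * (p : ℝ) - 2 * r - 1)
    _ ≤ ∑ p ∈ Icc 1 (2 * r), C * (p : ℝ) ^ (-δ) / |2 * (p : ℝ) - 2 * r - 1| :=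
        sum_le_sum fun p hp => by gcongr; exact ha p (mem_Icc.1 hp).1
    _ = C * ∑ p ∈ Icc 1 (2 * r), (p : ℝ) ^ (-δ) / |2 * (p : ℝ) - 2 * r - 1| := by
        rw [mul_sum]; simp only [mul_div_assoc]

lemma sum_Icc_div_two_mul_sub_mul_eq (b : ℕ → ℝ) (r : ℕ) :
    ∑ p ∈ Icc 1 (2 * r), (2 * (r : ℝ) + 1 - p) / (2 * (p : ℝ) - 2 * r - 1) * b p
      = ∑ p ∈ Icc 1 (2 * r), -b p
        + ∑ p ∈ Icc 1 (2 * r), p * b p / (2 * (p : ℝ) - 2 * r - 1) := by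
  rw [← sum_add_distrib]
  refine sum_congr rfl fun p _ => ?_
  have hD : 2 * (p : ℝ) - 2 * r - 1 ≠ 0 :=
    abs_pos.1 (one_pos.trans_le (one_le_abs_two_mul_sub_two_mul_sub_one p r))
  rw [show 2 * (r : ℝ) + 1 - p = -(2 * (p : ℝ) - 2 * r - 1) + p by ring, add_div, neg_div,
    div_self hD]
  ring

lemma tendsto_sum_Icc_one_two_mul_of_hasSum {M : Type*} [AddCommMonoid M] [TopologicalSpace M]
    {f : ℕ → M} {L : M} (h : HasSum (fun k => f (k + 1)) L) :
    Tendsto (fun r : ℕ => ∑ p ∈ Icc 1 (2 * r), f p) atTop (𝓝 L) := by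
  simp only [sum_Icc_one_eq_sum_range]
  exact h.tendsto_sum_nat.comp (tendsto_id.const_mul_atTop' two_pos)

lemma abs_one_sub_mul_log_le {s ε x : ℝ} (hs : 0 ≤ s) (hε : 0 < ε) (hx : 1 ≤ x) :
    |1 - s * log x| ≤ (1 + s / ε) * x ^ ε := by
  have hlog : 0 ≤ log x := log_nonneg hx
  have hlog_le : s * log x ≤ s * (x ^ ε / ε) :=
    mul_le_mul_of_nonneg_left (log_le_rpow_div (by linarith) hε) hs
  have hone : 1 ≤ x ^ ε := one_le_rpow hx hε.le
  have hsplit : (1 + s / ε) * x ^ ε = x ^ ε + s * (x ^ ε / ε) := by ring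
  rw [abs_le]
  constructor <;> linarith [mul_nonneg hs hlog]

lemma abs_rpow_mul_one_sub_mul_log_le {s ε x : ℝ} (a : ℝ) (hs : 0 ≤ s) (hε : 0 < ε) (hx : 1 ≤ x) :
    |x ^ a * (1 - s * log x)| ≤ (1 + s / ε) * x ^ (a + ε) := by
  have hx0 : 0 < x := by linarith
  rw [abs_mul, abs_of_pos (rpow_pos_of_pos hx0 a), rpow_add hx0]
  calc x ^ a * |1 - s * log x| ≤ x ^ a * ((1 + s / ε) * x ^ ε) := by
        gcongr; exact abs_one_sub_mul_log_le hs hε hx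
    _ = (1 + s / ε) * (x ^ a * x ^ ε) := by ring

/-- For every real `s > 2`, the series `∑_{p=1}^∞ p^{1−s}(1 − s ln p)` converges absolutely,
and `∑_{p=1}^{2r} [(2r+1−p)/(2p−2r−1)] · p^{1−s}(−1 + s ln p)` tends to
`∑_{p=1}^∞ p^{1−s}(1 − s ln p)` as the integer `r → ∞`. -/
theorem stmt6 (s : ℝ) (hs : 2 < s) :
    Summable (fun p : ℕ =>
        |((p : ℝ) + 1) ^ (1 - s) * (1 - s * Real.log ((p : ℝ) + 1))|) ∧
      Filter.Tendsto
        (fun r : ℕ =>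
          ∑ p ∈ Finset.Icc 1 (2 * r),
            ((2 * (r : ℝ) + 1 - (p : ℝ)) / (2 * (p : ℝ) - 2 * (r : ℝ) - 1)) *
              ((p : ℝ) ^ (1 - s) * (-1 + s * Real.log (p : ℝ))))
        Filter.atTop
        (nhds (∑' p : ℕ, ((p : ℝ) + 1) ^ (1 - s) * (1 - s * Real.log ((p : ℝ) + 1)))) := by
  set ε := (s - 2) / 2 with hε_def
  have hε : 0 < ε := by linarith
  have hbound (a : ℝ) {x : ℝ} (hx : 1 ≤ x) :
      |x ^ a * (1 - s * log x)| ≤ (1 + s / ε) * x ^ (a + ε) :=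
    abs_rpow_mul_one_sub_mul_log_le a (by linarith) hε hx
  have hsum : Summable fun p : ℕ => |((p : ℝ) + 1) ^ (1 - s) * (1 - s * log ((p : ℝ) + 1))| := by
    have hmajor : Summable fun p : ℕ => ((p + 1 : ℕ) : ℝ) ^ (1 - s + ε) :=
      (summable_nat_add_iff 1).2 (summable_nat_rpow.2 (by linarith))
    refine .of_nonneg_of_le (fun _ => abs_nonneg _) (fun p => ?_) (hmajor.mul_left (1 + s / ε))
    exact_mod_cast hbound (1 - s) (by simp)
  refine ⟨hsum, ?_⟩
  have hmain := tendsto_sum_Icc_one_two_mul_of_hasSum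
    (f := fun p : ℕ => -((p : ℝ) ^ (1 - s) * (-1 + s * log p))) <| by
      refine hsum.of_abs.hasSum.congr_fun fun k => ?_
      push_cast
      ring
  have herror := tendsto_sum_Icc_div_two_mul_sub_of_abs_le
    (a := fun p : ℕ => p * ((p : ℝ) ^ (1 - s) * (-1 + s * log p))) hε fun p hp => by
      have hp0 : (0 : ℝ) < p := by exact_mod_cast hp
      have h := hbound (2 - s) (Nat.one_le_cast.2 hp)
      rwa [show 2 - s + ε = -ε by linarith, show 2 - s = 1 + (1 - s) by ring, rpow_add hp0,
        rpow_one, ← abs_neg, show -(p * (p : ℝ) ^ (1 - s) * (1 - s * log p))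
          = p * ((p : ℝ) ^ (1 - s) * (-1 + s * log p)) by ring] at h
  simpa only [sum_Icc_div_two_mul_sub_mul_eq, add_zero] using hmain.add herror
end

section
/- Let (w_k)_{k∈ℕ} be nonnegative real numbers with ∑_{k} w_k = 1, let (λ_k)_{k∈ℕ} be positive real numbers, let s ≥ 1 be a real number, and let n ≥ 1 be an integer. Assume that the series ∑_k w_k λ_k^s converges with sum at least n^s, and that the series ∑_k w_k λ_k^s (ln λ_k)² converges. Then ∑_k w_k λ_k^s (ln λ_k)² ≥ n^s (ln n)². -/
private lemma key12 (x A : ℝ) (hx : 0 < x) (hA : 1 ≤ A) :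
    (Real.log A ^ 2 + 2 * Real.log A) * x - 2 * Real.log A * A ≤ x * Real.log x ^ 2 := by
  set L := Real.log A with hL
  have hL0 : 0 ≤ L := Real.log_nonneg hA
  have hA0 : 0 < A := lt_of_lt_of_le one_pos hA
  have h := Real.log_le_sub_one_of_pos (show 0 < A / x by positivity)
  rw [Real.log_div (ne_of_gt hA0) (ne_of_gt hx)] at h
  have hdx : A / x * x = A := div_mul_cancel₀ A (ne_of_gt hx)
  have htan : L * x + x - A ≤ x * Real.log x := by nlinarith [mul_le_mul_of_nonneg_right h hx.le]
  have hsq : 0 ≤ x * (Real.log x - L) ^ 2 := by positivity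
  nlinarith [mul_le_mul_of_nonneg_left htan (by linarith : (0:ℝ) ≤ 2 * L)]

/-- Let `(w_k)` be nonnegative reals summing to `1`, `(λ_k)` positive reals, `s ≥ 1` real
and `n ≥ 1` an integer. If `∑_k w_k λ_k^s` converges with sum at least `n^s`, and
`∑_k w_k λ_k^s (ln λ_k)²` converges, then `∑_k w_k λ_k^s (ln λ_k)² ≥ n^s (ln n)²`. -/
theorem stmt12 (w lam : ℕ → ℝ) (hw : ∀ k, 0 ≤ w k) (hw1 : HasSum w 1)
    (hlam : ∀ k, 0 < lam k) (s : ℝ) (hs : 1 ≤ s) (n : ℕ) (hn : 1 ≤ n)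
    (h1 : Summable (fun k => w k * lam k ^ s))
    (h1' : (n : ℝ) ^ s ≤ ∑' k, w k * lam k ^ s)
    (h2 : Summable (fun k => w k * lam k ^ s * Real.log (lam k) ^ 2)) :
    (n : ℝ) ^ s * Real.log (n : ℝ) ^ 2 ≤
      ∑' k, w k * lam k ^ s * Real.log (lam k) ^ 2 := by
  set x : ℕ → ℝ := fun k => lam k ^ s with hxdef
  have hx : ∀ k, 0 < x k := fun k => Real.rpow_pos_of_pos (hlam k) s
  set A := ∑' k, w k * x k with hAdef
  have hn1 : (1:ℝ) ≤ (n:ℝ) := by exact_mod_cast hn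
  have hns : (1:ℝ) ≤ (n:ℝ) ^ s := Real.one_le_rpow hn1 (by linarith)
  have hA1 : (1:ℝ) ≤ A := le_trans hns h1'
  set L := Real.log A with hLdef
  have hL0 : 0 ≤ L := Real.log_nonneg hA1
  have hlogx : ∀ k, Real.log (x k) = s * Real.log (lam k) :=
    fun k => Real.log_rpow (hlam k) s
  have hf : (fun k => w k * x k * Real.log (x k) ^ 2)
      = fun k => s ^ 2 * (w k * lam k ^ s * Real.log (lam k) ^ 2) := by
    funext k; rw [hlogx k]; ring
  have hfs : Summable (fun k => w k * x k * Real.log (x k) ^ 2) := by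
    rw [hf]; exact h2.mul_left _
  have hg1 : Summable (fun k => (L ^ 2 + 2 * L) * (w k * x k)) := h1.mul_left _
  have hg2 : Summable (fun k => (2 * L * A) * w k) := hw1.summable.mul_left _
  have hle : ∀ k, (L ^ 2 + 2 * L) * (w k * x k) - (2 * L * A) * w k
      ≤ w k * x k * Real.log (x k) ^ 2 := by
    intro k
    have hkey := key12 (x k) A (hx k) hA1
    nlinarith [mul_le_mul_of_nonneg_left hkey (hw k)]
  have hsum_le := Summable.tsum_le_tsum hle (hg1.sub hg2) hfs
  rw [Summable.tsum_sub hg1 hg2, tsum_mul_left, tsum_mul_left, hw1.tsum_eq] at hsum_le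
  have hfeq : ∑' k, w k * x k * Real.log (x k) ^ 2
      = s ^ 2 * ∑' k, w k * lam k ^ s * Real.log (lam k) ^ 2 := by
    rw [hf, tsum_mul_left]
  rw [hfeq] at hsum_le
  -- now  (L^2+2L)*A - 2LA*1 = L^2*A  ≤ s^2 * S₀
  have hABle : A * L ^ 2 ≤ s ^ 2 * ∑' k, w k * lam k ^ s * Real.log (lam k) ^ 2 := by
    nlinarith [hsum_le]
  -- monotonicity: s^2 * n^s * (ln n)^2 = n^s * (s ln n)^2 ≤ A * L^2
  have hlnn : 0 ≤ Real.log (n:ℝ) := Real.log_nonneg hn1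
  have hLlb : s * Real.log (n:ℝ) ≤ L := by
    rw [← Real.log_rpow (by linarith : (0:ℝ) < n) s, hLdef]
    exact Real.log_le_log (by positivity) h1'
  have hslnn : 0 ≤ s * Real.log (n:ℝ) := by positivity
  have hmono : (n:ℝ) ^ s * (s * Real.log (n:ℝ)) ^ 2 ≤ A * L ^ 2 := by
    apply mul_le_mul h1' (pow_le_pow_left₀ hslnn hLlb 2) (by positivity) (by linarith)
  have hs2 : (0:ℝ) < s ^ 2 := by positivity
  have : s ^ 2 * ((n:ℝ) ^ s * Real.log (n:ℝ) ^ 2)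
      ≤ s ^ 2 * ∑' k, w k * lam k ^ s * Real.log (lam k) ^ 2 := by nlinarith
  exact le_of_mul_le_mul_left this hs2
end

section
/- For distinct positive integers p and m define γ(p,m) = p·m·( 2·p·m·ln(p/m) + (p+m)(m−p) ) / ( (m−p)²·(m+p)² ). Then for every fixed positive integer m: (i) γ(m,p) = −γ(p,m) for every positive integer p ≠ m; (ii) lim_{r→∞} r·γ(r−m, m) = −m, the limit being over integers r > 2m; consequently there exists an integer R > 2m such that for all integers r ≥ R one has γ(r−m, m) < 0 and γ(m, r−m) > 0. -/
open Filter

lemma aux_tendsto15 (M : ℝ) (hM : 0 < M) :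
    Filter.Tendsto (fun x : ℝ => x * ((x - M) * M *
        (2 * (x - M) * M * Real.log ((x - M) / M) +
          (x - M + M) * (M - (x - M)))) /
        ((M - (x - M)) ^ 2 * (M + (x - M)) ^ 2)) atTop (nhds (-M)) := by
  have h1 : Tendsto (fun x : ℝ => M / (x - 2 * M)) atTop (nhds 0) := by
    have hx : Tendsto (fun x : ℝ => x - 2 * M) atTop atTop :=
      tendsto_atTop_add_const_right _ (-(2 * M)) tendsto_id
    have := (tendsto_inv_atTop_zero.comp hx).const_mul M
    simpa [div_eq_mul_inv, Function.comp] using this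
  have hone : Tendsto (fun x : ℝ => 1 + M / (x - 2 * M)) atTop (nhds 1) := by
    simpa using tendsto_const_nhds.add h1
  have hlogdiv : Tendsto (fun y : ℝ => Real.log y / y) atTop (nhds 0) :=
    Real.isLittleO_log_id_atTop.tendsto_div_nhds_zero
  have hxm : Tendsto (fun x : ℝ => x - M) atTop atTop :=
    tendsto_atTop_add_const_right _ (-M) tendsto_id
  have hfrac : Tendsto (fun x : ℝ => (x - M) / x) atTop (nhds 1) := by
    have hMx : Tendsto (fun x : ℝ => M / x) atTop (nhds 0) := by
      simpa [div_eq_mul_inv] using tendsto_inv_atTop_zero.const_mul M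
    have : Tendsto (fun x : ℝ => 1 - M / x) atTop (nhds (1 - 0)) :=
      tendsto_const_nhds.sub hMx
    rw [sub_zero] at this
    apply this.congr'
    filter_upwards [eventually_gt_atTop (0 : ℝ)] with x hx
    field_simp
  have h2 : Tendsto (fun x : ℝ => Real.log (x - M) / x) atTop (nhds 0) := by
    have hprod : Tendsto
        (fun x : ℝ => (Real.log (x - M) / (x - M)) * ((x - M) / x))
        atTop (nhds (0 * 1)) := (hlogdiv.comp hxm).mul hfrac
    rw [zero_mul] at hprod
    apply hprod.congr'
    filter_upwards [eventually_gt_atTop (max M 0)] with x hx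
    have hxm0 : x - M ≠ 0 := sub_ne_zero.mpr (ne_of_gt (lt_of_le_of_lt (le_max_left _ _) hx))
    field_simp
  have h3 : Tendsto (fun x : ℝ => Real.log M / x) atTop (nhds 0) := by
    simpa [div_eq_mul_inv] using tendsto_inv_atTop_zero.const_mul (Real.log M)
  have hA : Tendsto (fun x : ℝ =>
      2 * M ^ 2 * (1 + M / (x - 2 * M)) ^ 2 *
        (Real.log (x - M) / x - Real.log M / x)) atTop (nhds 0) := by
    have := ((tendsto_const_nhds (x := (2 * M ^ 2 : ℝ))).mul (hone.pow 2)).mul (h2.sub h3)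
    simpa using this
  have hB : Tendsto (fun x : ℝ => -M * (1 + M / (x - 2 * M))) atTop (nhds (-M * 1)) :=
    hone.const_mul (-M)
  have hg : Tendsto (fun x : ℝ =>
      2 * M ^ 2 * (1 + M / (x - 2 * M)) ^ 2 *
        (Real.log (x - M) / x - Real.log M / x) +
      -M * (1 + M / (x - 2 * M))) atTop (nhds (-M)) := by
    have := hA.add hB
    simpa using this
  apply hg.congr'
  filter_upwards [eventually_gt_atTop (2 * M)] with x hx
  have hx0 : 0 < x := lt_trans (by linarith) hx
  have hxM : 0 < x - M := by linarith
  have hx2M : x - 2 * M ≠ 0 := by intro h; nlinarith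
  rw [Real.log_div (ne_of_gt hxM) (ne_of_gt hM)]
  have hMx : M - (x - M) ≠ 0 := by intro h; nlinarith
  have hMx' : M + (x - M) ≠ 0 := by intro h; nlinarith
  field_simp
  ring

/-- For distinct positive integers `p, m` let
`γ(p,m) = pm(2pm·ln(p/m) + (p+m)(m−p)) / ((m−p)²(m+p)²)`. Then for every positive
integer `m`: (i) `γ(m,p) = −γ(p,m)` for every positive integer `p ≠ m`;
(ii) `r·γ(r−m, m) → −m` as the integer `r → ∞` (over integers `r > 2m`); consequently
there is an integer `R > 2m` with `γ(r−m, m) < 0` and `γ(m, r−m) > 0` for all `r ≥ R`. -/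
theorem stmt15 (γ : ℕ → ℕ → ℝ)
    (hγ : ∀ p m : ℕ, 0 < p → 0 < m → p ≠ m →
      γ p m = (p : ℝ) * (m : ℝ) *
          (2 * (p : ℝ) * (m : ℝ) * Real.log ((p : ℝ) / (m : ℝ)) +
            ((p : ℝ) + (m : ℝ)) * ((m : ℝ) - (p : ℝ))) /
        (((m : ℝ) - (p : ℝ)) ^ 2 * ((m : ℝ) + (p : ℝ)) ^ 2))
    (m : ℕ) (hm : 0 < m) :
    (∀ p : ℕ, 0 < p → p ≠ m → γ m p = -γ p m) ∧
    Filter.Tendsto (fun r : ℕ => (r : ℝ) * γ (r - m) m) Filter.atTop (nhds (-(m : ℝ))) ∧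
    ∃ R : ℕ, 2 * m < R ∧ ∀ r : ℕ, R ≤ r → γ (r - m) m < 0 ∧ 0 < γ m (r - m) := by
  have hM : (0 : ℝ) < m := by exact_mod_cast hm
  have hanti : ∀ p : ℕ, 0 < p → p ≠ m → γ m p = -γ p m := by
    intro p hp hpm
    rw [hγ m p hm hp hpm.symm, hγ p m hp hm hpm]
    have hp0 : (p : ℝ) ≠ 0 := by exact_mod_cast hp.ne'
    have hm0 : (m : ℝ) ≠ 0 := ne_of_gt hM
    have hpm' : (p : ℝ) ≠ (m : ℝ) := by exact_mod_cast hpm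
    rw [Real.log_div hm0 hp0, Real.log_div hp0 hm0]
    have hsub : (p : ℝ) - m ≠ 0 := sub_ne_zero.mpr hpm'
    have hsub' : (m : ℝ) - p ≠ 0 := sub_ne_zero.mpr hpm'.symm
    have hadd : (p : ℝ) + m ≠ 0 := by positivity
    have hadd' : (m : ℝ) + p ≠ 0 := by positivity
    field_simp
    ring
  have htend : Filter.Tendsto (fun r : ℕ => (r : ℝ) * γ (r - m) m)
      Filter.atTop (nhds (-(m : ℝ))) := by
    have hF := (aux_tendsto15 (m : ℝ) hM).comp tendsto_natCast_atTop_atTop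
    apply hF.congr'
    filter_upwards [eventually_ge_atTop (2 * m + 1)] with r hr
    have h1 : m ≤ r := by omega
    have h2 : 0 < r - m := by omega
    have h3 : r - m ≠ m := by omega
    rw [Function.comp_apply, hγ (r - m) m h2 hm h3, Nat.cast_sub h1]
    have hr2 : 2 * (m : ℝ) < r := by
      have : 2 * m < r := by omega
      exact_mod_cast this
    have hne1 : (m : ℝ) - ((r : ℝ) - m) ≠ 0 := by intro h; nlinarith
    have hne2 : (m : ℝ) + ((r : ℝ) - m) ≠ 0 := by intro h; nlinarith
    field_simp
  refine ⟨hanti, htend, ?_⟩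
  have hneg : -(m : ℝ) < 0 := by linarith
  have hlt : ∀ᶠ r : ℕ in atTop, (r : ℝ) * γ (r - m) m < 0 :=
    htend.eventually_lt_const hneg
  obtain ⟨R0, hR0⟩ := eventually_atTop.mp hlt
  refine ⟨max R0 (2 * m + 1), by omega, ?_⟩
  intro r hrR
  have hr1 : R0 ≤ r := le_trans (le_max_left _ _) hrR
  have hr2 : 2 * m + 1 ≤ r := le_trans (le_max_right _ _) hrR
  have hrpos : (0 : ℝ) < r := by
    have : 0 < r := by omega
    exact_mod_cast this
  have hmul := hR0 r hr1
  have hγneg : γ (r - m) m < 0 := by nlinarith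
  have h2 : 0 < r - m := by omega
  have h3 : r - m ≠ m := by omega
  have := hanti (r - m) h2 h3
  constructor
  · exact hγneg
  · rw [this]; linarith
end
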